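/- arXiv:2210.08017 — 6 statements merged into one kernel-verified Lean document; each statement's English description precedes it below -/
import Mathlib

section
/- For real η ≥ 0 and R > 0, the exponential e^{-ηR}/R admits the Gaussian transform representation e^{-ηR}/R = (1/√π) ∫₀^∞ exp(-R²ρ) exp(-η²/(4ρ)) ρ^{-1/2} dρ. -/
open MeasureTheory Real Set

lemma sq_expand (a b u : ℝ) (hu : u ≠ 0) :
    (a*u - b/u)^2 = a^2*u^2 - 2*a*b + b^2/u^2 := by
  field_simp; ring

lemma xexp_le (x : ℝ) : x * Real.exp (-x) ≤ Real.exp (-1) := by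
  have h1 : x ≤ Real.exp (x-1) := by linarith [Real.add_one_le_exp (x-1)]
  calc x * Real.exp (-x) ≤ Real.exp (x-1) * Real.exp (-x) :=
        mul_le_mul_of_nonneg_right h1 (Real.exp_nonneg _)
    _ = Real.exp (-1) := by rw [← Real.exp_add]; ring_nf

lemma cont_f (a b : ℝ) : ContinuousOn (fun u : ℝ => Real.exp (-(a*u - b/u)^2)) (Ioi 0) := by
  apply Real.continuous_exp.comp_continuousOn
  apply ContinuousOn.neg
  apply ContinuousOn.pow
  exact (continuousOn_const.mul continuousOn_id).sub
    (continuousOn_const.div continuousOn_id (fun x hx => ne_of_gt hx))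

lemma majorant_int (a c : ℝ) (ha : 0 < a) :
    IntegrableOn (fun u : ℝ => c * Real.exp (-(a^2) * u^2)) (Ioi 0) := by
  exact ((integrable_exp_neg_mul_sq (by positivity : (0:ℝ) < a^2)).const_mul c).integrableOn

lemma I1 (a b : ℝ) (ha : 0 < a) (hb : 0 ≤ b) :
    IntegrableOn (fun u : ℝ => a * Real.exp (-(a*u - b/u)^2)) (Ioi 0) := by
  apply Integrable.mono' (majorant_int a (a * Real.exp (2*a*b)) ha)
  · exact (continuousOn_const.mul (cont_f a b)).aestronglyMeasurable measurableSet_Ioi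
  · rw [ae_restrict_iff' measurableSet_Ioi]
    filter_upwards with u hu
    have hu0 : u ≠ 0 := ne_of_gt hu
    have key : -((a*u - b/u)^2) ≤ 2*a*b + (-(a^2) * u^2) := by
      rw [sq_expand a b u hu0]
      have : 0 ≤ b^2/u^2 := by positivity
      linarith
    have : Real.exp (-(a*u - b/u)^2) ≤ Real.exp (2*a*b) * Real.exp (-(a^2)*u^2) := by
      rw [← Real.exp_add]; exact Real.exp_le_exp.2 key
    rw [Real.norm_eq_abs, abs_of_nonneg (by positivity)]
    calc a * Real.exp (-(a*u - b/u)^2) ≤ a * (Real.exp (2*a*b) * Real.exp (-(a^2)*u^2)) :=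
          mul_le_mul_of_nonneg_left this (le_of_lt ha)
      _ = a * Real.exp (2*a*b) * Real.exp (-(a^2)*u^2) := by ring

lemma I2 (a b : ℝ) (ha : 0 < a) (hb : 0 < b) :
    IntegrableOn (fun u : ℝ => (b/u^2) * Real.exp (-(a*u - b/u)^2)) (Ioi 0) := by
  apply Integrable.mono' (majorant_int a (Real.exp (2*a*b) / (b * Real.exp 1)) ha)
  · apply ContinuousOn.aestronglyMeasurable _ measurableSet_Ioi
    exact (continuousOn_const.div (continuousOn_id.pow 2)
      (fun x hx => pow_ne_zero 2 (ne_of_gt hx))).mul (cont_f a b)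
  · rw [ae_restrict_iff' measurableSet_Ioi]
    filter_upwards with u hu
    have hu0 : u ≠ 0 := ne_of_gt hu
    rw [Real.norm_eq_abs, abs_of_nonneg (by positivity)]
    have hexp : Real.exp (-(a*u - b/u)^2)
        = Real.exp (2*a*b) * Real.exp (-(a^2)*u^2) * Real.exp (-(b^2/u^2)) := by
      rw [← Real.exp_add, ← Real.exp_add]
      congr 1
      rw [sq_expand a b u hu0]; ring
    have hxe : (b^2/u^2) * Real.exp (-(b^2/u^2)) ≤ Real.exp (-1) := xexp_le _
    have h2 : (b/u^2) * Real.exp (-(b^2/u^2)) ≤ Real.exp (-1) / b := by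
      rw [le_div_iff₀ hb]
      calc (b/u^2) * Real.exp (-(b^2/u^2)) * b = (b^2/u^2) * Real.exp (-(b^2/u^2)) := by ring
        _ ≤ Real.exp (-1) := hxe
    calc (b/u^2) * Real.exp (-(a*u - b/u)^2)
        = (Real.exp (2*a*b) * Real.exp (-(a^2)*u^2)) * ((b/u^2) * Real.exp (-(b^2/u^2))) := by
          rw [hexp]; ring
      _ ≤ (Real.exp (2*a*b) * Real.exp (-(a^2)*u^2)) * (Real.exp (-1) / b) := by
          apply mul_le_mul_of_nonneg_left h2 (by positivity)
      _ = Real.exp (2*a*b) / (b * Real.exp 1) * Real.exp (-(a^2)*u^2) := by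
          rw [Real.exp_neg]; field_simp

lemma inversion_eq (a b : ℝ) (ha : 0 < a) (hb : 0 < b) :
    ∫ u in Ioi (0:ℝ), (b/(a*u^2)) * Real.exp (-(a*u - b/u)^2)
      = ∫ t in Ioi (0:ℝ), Real.exp (-(a*t - b/t)^2) := by
  have himg : (fun t : ℝ => b/(a*t)) '' (Ioi 0) = Ioi 0 := by
    ext y
    constructor
    · rintro ⟨t, ht, rfl⟩
      exact div_pos hb (mul_pos ha ht)
    · intro hy
      refine ⟨b/(a*y), div_pos hb (mul_pos ha hy), ?_⟩
      field_simp
  have hderiv : ∀ t ∈ Ioi (0:ℝ),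
      HasDerivWithinAt (fun t : ℝ => b/(a*t)) (-(b/(a*t^2))) (Ioi 0) t := by
    intro t ht
    have ht0 : t ≠ 0 := ne_of_gt ht
    have h : HasDerivAt (fun t : ℝ => b/(a*t)) (-(b/(a*t^2))) t := by
      have h1 : HasDerivAt (fun t : ℝ => t⁻¹) (-(t^2)⁻¹) t := hasDerivAt_inv ht0
      have h2 := h1.const_mul (b/a)
      rw [show (fun t : ℝ => b/(a*t)) = fun y => b / a * y⁻¹ by ext x; ring,
        show -(b/(a*t^2)) = b / a * -(t^2)⁻¹ by ring]
      exact h2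
    exact h.hasDerivWithinAt
  have hinj : InjOn (fun t : ℝ => b/(a*t)) (Ioi 0) := by
    intro x hx y hy h
    have hx0 : x ≠ 0 := ne_of_gt hx
    have hy0 : y ≠ 0 := ne_of_gt hy
    simp only at h
    have h' : b*(a*y) = b*(a*x) := (div_eq_div_iff (by positivity) (by positivity)).1 h
    have h'' := mul_left_cancel₀ (ne_of_gt hb) h'
    exact (mul_left_cancel₀ (ne_of_gt ha) h'').symm
  have := integral_image_eq_integral_abs_deriv_smul measurableSet_Ioi hderiv hinj
    (fun x => Real.exp (-(a*x - b/x)^2))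
  rw [himg] at this
  rw [this]
  apply setIntegral_congr_fun measurableSet_Ioi
  intro t ht
  have ht0 : (t:ℝ) ≠ 0 := ne_of_gt ht
  have habs : |(-(b/(a*t^2)))| = b/(a*t^2) := by
    rw [abs_neg, abs_of_nonneg (by positivity)]
  simp only [smul_eq_mul, habs]
  congr 2
  have : a * (b/(a*t)) - b/(b/(a*t)) = -(a*t - b/t) := by
    field_simp
    ring
  rw [this, neg_sq]

lemma full_sub (a b : ℝ) (ha : 0 < a) (hb : 0 < b) :
    ∫ u in Ioi (0:ℝ), (a + b/u^2) * Real.exp (-(a*u - b/u)^2) = Real.sqrt π := by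
  set f : ℝ → ℝ := fun u => a*u - b/u with hf
  have himg : f '' (Ioi 0) = univ := by
    ext y
    simp only [mem_univ, iff_true]
    set s := Real.sqrt (y^2 + 4*a*b) with hs
    have hs2 : s^2 = y^2 + 4*a*b := Real.sq_sqrt (by positivity)
    have hsy : -y < s := by
      rcases le_or_gt 0 y with hy | hy
      · have : 0 < s := Real.sqrt_pos.2 (by positivity)
        linarith
      · have h1 : |y| < s := by
          have : |y| = Real.sqrt (y^2) := (Real.sqrt_sq_eq_abs y).symm
          rw [this, hs]
          exact Real.sqrt_lt_sqrt (by positivity) (by nlinarith)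
        calc -y ≤ |y| := neg_le_abs y
          _ < s := h1
    set u := (y + s)/(2*a) with hu
    have hu0 : 0 < u := div_pos (by linarith) (by linarith)
    refine ⟨u, hu0, ?_⟩
    show a*u - b/u = y
    have hune : u ≠ 0 := ne_of_gt hu0
    have key : a*u^2 - y*u - b = 0 := by
      have : u = (y+s)/(2*a) := hu
      have e : a*u^2 - y*u - b = (s^2 - y^2 - 4*a*b)/(4*a) := by
        rw [this]; field_simp; ring
      rw [e, hs2]; ring
    field_simp
    nlinarith [key]
  have hderiv : ∀ u ∈ Ioi (0:ℝ), HasDerivWithinAt f (a + b/u^2) (Ioi 0) u := by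
    intro u hu
    have hu0 : u ≠ 0 := ne_of_gt hu
    have h1 : HasDerivAt (fun u : ℝ => a*u) a u := by
      simpa using (hasDerivAt_id u).const_mul a
    have h2 : HasDerivAt (fun u : ℝ => b/u) (-(b/u^2)) u := by
      have h := (hasDerivAt_inv hu0).const_mul b
      have he : b * -(u^2)⁻¹ = -(b/u^2) := by field_simp
      rw [he] at h
      simpa [div_eq_mul_inv] using h
    have := h1.sub h2
    rw [show a + b/u^2 = a - -(b/u^2) by ring]
    exact this.hasDerivWithinAt
  have hinj : InjOn f (Ioi 0) := by
    apply StrictMonoOn.injOn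
    intro x hx y hy hxy
    simp only [hf]
    have hx0 : (0:ℝ) < x := hx
    have hy0 : (0:ℝ) < y := hy
    have h1 : a*x < a*y := by nlinarith
    have h2 : b/y < b/x := div_lt_div_of_pos_left hb hx0 hxy
    linarith
  have := integral_image_eq_integral_abs_deriv_smul measurableSet_Ioi hderiv hinj
    (fun v => Real.exp (-v^2))
  rw [himg] at this
  have hL : ∫ x in (univ : Set ℝ), Real.exp (-x^2) = Real.sqrt π := by
    rw [Measure.restrict_univ]
    have := integral_gaussian 1
    simpa using this
  rw [← hL, this]
  apply setIntegral_congr_fun measurableSet_Ioi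
  intro u hu
  have : |a + b/u^2| = a + b/u^2 := abs_of_pos (by positivity)
  simp only [smul_eq_mul, this, hf]

lemma slater_core (a b : ℝ) (ha : 0 < a) (hb : 0 ≤ b) :
    ∫ t in Ioi (0:ℝ), Real.exp (-(a*t - b/t)^2) = Real.sqrt π / (2*a) := by
  rcases eq_or_lt_of_le hb with hb0 | hb
  · -- b = 0
    have : ∀ t : ℝ, Real.exp (-(a*t - b/t)^2) = Real.exp (-(a^2) * t^2) := by
      intro t; rw [← hb0]; congr 1; ring
    simp_rw [this]
    rw [integral_gaussian_Ioi (a^2)]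
    have h4 : Real.sqrt (π/a^2) = Real.sqrt π / a := by
      rw [Real.sqrt_div Real.pi_pos.le, Real.sqrt_sq ha.le]
    rw [h4]
    ring
  · have h1 := full_sub a b ha hb
    have hsplit : ∫ u in Ioi (0:ℝ), (a + b/u^2) * Real.exp (-(a*u - b/u)^2)
        = (∫ u in Ioi (0:ℝ), a * Real.exp (-(a*u - b/u)^2))
          + ∫ u in Ioi (0:ℝ), (b/u^2) * Real.exp (-(a*u - b/u)^2) := by
      rw [← integral_add (I1 a b ha hb.le) (I2 a b ha hb)]
      congr 1; ext u; ring
    have h2 : ∫ u in Ioi (0:ℝ), a * Real.exp (-(a*u - b/u)^2)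
        = a * ∫ u in Ioi (0:ℝ), Real.exp (-(a*u - b/u)^2) := integral_const_mul a _
    have h3 : ∫ u in Ioi (0:ℝ), (b/u^2) * Real.exp (-(a*u - b/u)^2)
        = a * ∫ u in Ioi (0:ℝ), Real.exp (-(a*u - b/u)^2) := by
      rw [← inversion_eq a b ha hb, ← integral_const_mul]
      congr 1; ext u
      have ha0 : a ≠ 0 := ne_of_gt ha
      rcases eq_or_ne u 0 with rfl | hu
      · simp
      · field_simp
    rw [hsplit, h2, h3] at h1
    have ha' : (2*a) ≠ 0 := by positivity
    rw [eq_div_iff ha']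
    linarith

theorem gaussian_transform_slater (η R : ℝ) (hη : 0 ≤ η) (hR : 0 < R) :
    Real.exp (-η * R) / R =
      (1 / Real.sqrt π) *
        ∫ ρ in Set.Ioi (0:ℝ),
          Real.exp (-R ^ 2 * ρ) * Real.exp (-η ^ 2 / (4 * ρ)) * ρ ^ (-(1:ℝ)/2) := by
  set g : ℝ → ℝ := fun ρ => Real.exp (-R^2*ρ) * Real.exp (-η^2/(4*ρ)) * ρ^(-(1:ℝ)/2) with hg
  have hsub := integral_comp_rpow_Ioi g (p := 2) two_ne_zero
  rw [← hsub]
  have hstep : (∫ t in Ioi (0:ℝ), (|(2:ℝ)| * t^((2:ℝ)-1)) • g (t^(2:ℝ)))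
      = ∫ t in Ioi (0:ℝ), (2 * Real.exp (-η*R)) * Real.exp (-(R*t - (η/2)/t)^2) := by
    apply setIntegral_congr_fun measurableSet_Ioi
    intro t ht
    have ht0 : t ≠ 0 := ne_of_gt ht
    have ht2 : t^(2:ℝ) = t^2 := by
      rw [show (2:ℝ) = ((2:ℕ):ℝ) by norm_num, Real.rpow_natCast]
    have hpow : (t^(2:ℝ))^(-(1:ℝ)/2) = t⁻¹ := by
      rw [← Real.rpow_natCast t 2] at *
      rw [← Real.rpow_mul (le_of_lt ht)]
      norm_num
      exact Real.rpow_neg_one t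
    have hrp1 : t^((2:ℝ)-1) = t := by norm_num
    simp only [hg, smul_eq_mul, hrp1, ht2]
    rw [← ht2, hpow, ht2]
    have hexp : Real.exp (-R^2*t^2) * Real.exp (-η^2/(4*t^2))
        = Real.exp (-η*R) * Real.exp (-(R*t - (η/2)/t)^2) := by
      rw [← Real.exp_add, ← Real.exp_add]
      congr 1
      have : (R*t - (η/2)/t)^2 = R^2*t^2 - 2*R*(η/2) + (η/2)^2/t^2 := sq_expand R (η/2) t ht0
      rw [this]
      field_simp
      ring
    rw [hexp]
    field_simp
    ring
  rw [hstep, integral_const_mul, slater_core R (η/2) hR (by positivity)]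
  have hπ : Real.sqrt π ≠ 0 := ne_of_gt (Real.sqrt_pos.2 Real.pi_pos)
  field_simp
end

section
/- For positive real η₁ and nonzero x₂ ∈ ℝ³: ∫_{ℝ³} (e^{-η₁‖x₁‖}/‖x₁‖) · (1/‖x₁ - x₂‖) dx₁ = 4π (1 - e^{-η₁‖x₂‖}) / (‖x₂‖ η₁²). -/
open MeasureTheory Real Set
open scoped ENNReal

lemma lintegral_comp_polarCoord_symm' (g : ℝ × ℝ → ℝ≥0∞) :
    ∫⁻ p in polarCoord.target, ENNReal.ofReal p.1 * g (polarCoord.symm p) = ∫⁻ p, g p := by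
  set B : ℝ × ℝ → ℝ × ℝ →L[ℝ] ℝ × ℝ := fun p =>
    LinearMap.toContinuousLinearMap (Matrix.toLin (Module.Basis.finTwoProd ℝ) (Module.Basis.finTwoProd ℝ)
      !![Real.cos p.2, -p.1 * Real.sin p.2; Real.sin p.2, p.1 * Real.cos p.2])
  have A : ∀ p ∈ polarCoord.target, HasFDerivWithinAt polarCoord.symm (B p) polarCoord.target p :=
    fun p _ => (hasFDerivAt_polarCoord_symm p).hasFDerivWithinAt
  have B_det : ∀ p, (B p).det = p.1 := by
    intro p
    conv_rhs => rw [← one_mul p.1, ← cos_sq_add_sin_sq p.2]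
    simp only [B, neg_mul, LinearMap.det_toContinuousLinearMap, LinearMap.det_toLin,
      Matrix.det_fin_two_of, sub_neg_eq_add]
    ring
  symm
  calc
    ∫⁻ p, g p = ∫⁻ p in polarCoord.source, g p := by
      rw [← setLIntegral_univ]
      exact (setLIntegral_congr polarCoord_source_ae_eq_univ).symm
    _ = ∫⁻ p in polarCoord.symm '' polarCoord.target, g p := by
      rw [polarCoord.symm_image_target_eq_source]
    _ = ∫⁻ p in polarCoord.target, ENNReal.ofReal |(B p).det| * g (polarCoord.symm p) := by
      exact lintegral_image_eq_lintegral_abs_det_fderiv_mul volume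
        polarCoord.open_target.measurableSet A polarCoord.symm.injOn g
    _ = ∫⁻ p in polarCoord.target, ENNReal.ofReal p.1 * g (polarCoord.symm p) := by
      refine setLIntegral_congr_fun polarCoord.open_target.measurableSet
        (fun p hp => ?_)
      rw [B_det, abs_of_pos hp.1]


lemma sqrt_subst (z : ℝ) (g : ℝ → ℝ≥0∞) :
    ∫⁻ u in Ioi |z|, g u =
      ∫⁻ ρ in Ioi (0:ℝ),
        ENNReal.ofReal (ρ / Real.sqrt (ρ^2+z^2)) * g (Real.sqrt (ρ^2+z^2)) := by
  have hf' : ∀ ρ ∈ Ioi (0:ℝ), HasDerivWithinAt (fun ρ => Real.sqrt (ρ^2+z^2))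
      (ρ / Real.sqrt (ρ^2+z^2)) (Ioi 0) ρ := by
    intro ρ hρ
    have hρ0 : 0 < ρ := hρ
    have hpos : 0 < ρ^2 + z^2 := by nlinarith
    have h1 : HasDerivAt (fun ρ : ℝ => ρ^2+z^2) (2*ρ) ρ := by
      simpa using ((hasDerivAt_pow 2 ρ).add_const (z^2))
    have := (Real.hasDerivAt_sqrt hpos.ne').comp ρ h1
    have h2 : 1 / (2 * Real.sqrt (ρ^2+z^2)) * (2*ρ) = ρ / Real.sqrt (ρ^2+z^2) := by
      field_simp
    rw [h2] at this
    exact this.hasDerivWithinAt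
  have hinj : InjOn (fun ρ => Real.sqrt (ρ^2+z^2)) (Ioi 0) := by
    intro a ha b hb hab
    simp only at hab
    have h1 : a^2 + z^2 = b^2 + z^2 := by
      have := congrArg (fun t => t^2) hab
      simpa [Real.sq_sqrt (by positivity : (0:ℝ) ≤ a^2+z^2),
        Real.sq_sqrt (by positivity : (0:ℝ) ≤ b^2+z^2)] using this
    have h2 : a^2 = b^2 := by linarith
    calc a = Real.sqrt (a^2) := (Real.sqrt_sq (le_of_lt ha)).symm
      _ = Real.sqrt (b^2) := by rw [h2]
      _ = b := Real.sqrt_sq (le_of_lt hb)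
  have himg : (fun ρ => Real.sqrt (ρ^2+z^2)) '' (Ioi 0) = Ioi |z| := by
    ext u
    constructor
    · rintro ⟨ρ, hρ, rfl⟩
      have : z^2 < ρ^2 + z^2 := by nlinarith [hρ.out]
      simpa [Real.sqrt_sq_eq_abs] using Real.sqrt_lt_sqrt (by positivity) this
    · intro hu
      have habs : |z| < u := hu
      have hu0 : 0 < u := lt_of_le_of_lt (abs_nonneg z) habs
      have hz2 : z^2 < u^2 := by
        have := sq_lt_sq' (by linarith [neg_abs_le z, habs] : -u < z)
          (lt_of_le_of_lt (le_abs_self z) habs)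
        simpa using this
      have h3 : (0:ℝ) < u^2 - z^2 := by linarith
      refine ⟨Real.sqrt (u^2 - z^2), mem_Ioi.2 (Real.sqrt_pos.2 h3), ?_⟩
      simp only
      rw [Real.sq_sqrt (by linarith)]
      rw [sub_add_cancel, Real.sqrt_sq hu0.le]
  calc ∫⁻ u in Ioi |z|, g u
      = ∫⁻ u in (fun ρ => Real.sqrt (ρ^2+z^2)) '' (Ioi 0), g u := by rw [himg]
    _ = ∫⁻ ρ in Ioi (0:ℝ), ENNReal.ofReal (ρ / Real.sqrt (ρ^2+z^2)) * g (Real.sqrt (ρ^2+z^2)) := by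
      have := lintegral_image_eq_lintegral_abs_det_fderiv_mul volume measurableSet_Ioi
        (fun ρ hρ => ((hf' ρ hρ)).hasFDerivWithinAt) hinj g
      simp only [ContinuousLinearMap.det_toSpanSingleton] at this
      rw [this]
      refine setLIntegral_congr_fun measurableSet_Ioi
        (fun ρ hρ => ?_)
      rw [abs_of_nonneg (div_nonneg (le_of_lt hρ) (Real.sqrt_nonneg _))]


lemma inner_z_integral {R u : ℝ} (hR : 0 < R) (hu : 0 < u) (hne : u ≠ R) :
    ∫ z in (-u)..u, (Real.sqrt (u^2+R^2-2*R*z))⁻¹ = (u + R - |u - R|)/R := by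
  have hpos : ∀ z ∈ Set.uIcc (-u) u, 0 < u^2+R^2-2*R*z := by
    intro z hz
    rw [Set.uIcc_of_le (by linarith)] at hz
    have h1 : z ≤ u := hz.2
    have h2 : (0:ℝ) < (u-R)^2 := by
      have h := sub_ne_zero.2 hne
      positivity
    nlinarith
  have hderiv : ∀ z ∈ Set.uIcc (-u) u,
      HasDerivAt (fun z => -(Real.sqrt (u^2+R^2-2*R*z))/R)
        ((Real.sqrt (u^2+R^2-2*R*z))⁻¹) z := by
    intro z hz
    have harg : HasDerivAt (fun z : ℝ => u^2+R^2-2*R*z) (-(2*R)) z := by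
      simpa using ((hasDerivAt_id z).const_mul (2*R)).const_sub (u^2+R^2)
    have hs := (Real.hasDerivAt_sqrt (hpos z hz).ne').comp z harg
    have hd := (hs.div_const R).neg
    have h0 : Real.sqrt (u^2+R^2-2*R*z) > 0 := Real.sqrt_pos.2 (hpos z hz)
    have hfun : (-fun x => (((fun x => Real.sqrt x) ∘ fun z => u^2+R^2-2*R*z) x / R)) =
        (fun z => -(Real.sqrt (u^2+R^2-2*R*z))/R) := by
      funext w; simp [Function.comp, neg_div]
    have hval : -(1 / (2 * Real.sqrt (u^2+R^2-2*R*z)) * -(2*R) / R)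
        = (Real.sqrt (u^2+R^2-2*R*z))⁻¹ := by
      field_simp
    rw [hfun, hval] at hd
    exact hd
  have hcont : IntervalIntegrable (fun z => (Real.sqrt (u^2+R^2-2*R*z))⁻¹)
      volume (-u) u := by
    apply ContinuousOn.intervalIntegrable
    intro z hz
    exact ((continuousOn_const.sub (continuousOn_const.mul continuousOn_id)).sqrt.inv₀
      (fun z hz => (Real.sqrt_pos.2 (hpos z hz)).ne')).continuousWithinAt hz |>.mono
      (by intro w hw; exact hw) |>.congr (fun w hw => rfl) rfl
  rw [intervalIntegral.integral_eq_sub_of_hasDerivAt hderiv hcont]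
  have e1 : u^2+R^2-2*R*u = (u-R)^2 := by ring
  have e2 : u^2+R^2-2*R*(-u) = (u+R)^2 := by ring
  have e3 : |u+R| = u+R := abs_of_pos (by linarith)
  rw [e1, e2, Real.sqrt_sq_eq_abs, Real.sqrt_sq_eq_abs, e3]
  ring


lemma exp_tail {η : ℝ} (hη : 0 < η) (R : ℝ) :
    ∫ u in Ioi R, Real.exp (-(η*u)) = Real.exp (-(η*R))/η := by
  have h : ∀ u : ℝ, Real.exp (-(η*u)) = (fun x => Real.exp (-x)) (η*u) := fun u => rfl
  calc ∫ u in Ioi R, Real.exp (-(η*u)) = ∫ u in Ioi R, (fun x => Real.exp (-x)) (η*u) := rfl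
    _ = η⁻¹ • ∫ x in Ioi (η*R), Real.exp (-x) := integral_comp_mul_left_Ioi (fun x => Real.exp (-x)) R hη
    _ = Real.exp (-(η*R))/η := by
      rw [integral_exp_neg_Ioi]
      simp [smul_eq_mul, div_eq_inv_mul]

lemma exp_mid {η : ℝ} (hη : 0 < η) (R : ℝ) :
    ∫ u in (0:ℝ)..R, u * Real.exp (-(η*u))
      = (1 - Real.exp (-(η*R))*(1+η*R))/η^2 := by
  have hderiv : ∀ u ∈ Set.uIcc (0:ℝ) R,
      HasDerivAt (fun u => -((u/η + 1/η^2) * Real.exp (-(η*u))))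
        (u * Real.exp (-(η*u))) u := by
    intro u _
    have h1 : HasDerivAt (fun u : ℝ => u/η + 1/η^2) (1/η) u := by
      exact ((hasDerivAt_id u).div_const η).add_const (1/η^2)
    have h2 : HasDerivAt (fun u : ℝ => Real.exp (-(η*u))) (-η * Real.exp (-(η*u))) u := by
      have : HasDerivAt (fun u : ℝ => -(η*u)) (-η) u := by
        simpa using (show HasDerivAt (fun u => -(η * id u)) (-(η*1)) u from ((hasDerivAt_id u).const_mul η).neg)
      simpa [mul_comm, Function.comp_def] using (Real.hasDerivAt_exp (-(η*u))).comp u this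
    have := show HasDerivAt (fun u => -((u/η + 1/η^2) * Real.exp (-(η*u))))
      (-(1/η * Real.exp (-(η*u)) + (u/η + 1/η^2) * (-η * Real.exp (-(η*u))))) u from (h1.mul h2).neg
    convert this using 1
    field_simp
    ring
  have hint : IntervalIntegrable (fun u => u * Real.exp (-(η*u))) volume 0 R :=
    (continuous_id.mul (by continuity)).intervalIntegrable 0 R
  rw [intervalIntegral.integral_eq_sub_of_hasDerivAt hderiv hint]
  simp only [mul_zero, neg_zero, Real.exp_zero]
  field_simp
  ring


lemma lintegral_euclidean_three (f : ℝ × ℝ × ℝ → ℝ≥0∞) :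
    ∫⁻ y : EuclideanSpace ℝ (Fin 3), f (y 0, y 1, y 2) = ∫⁻ p : ℝ × ℝ × ℝ, f p := by
  have e1 := EuclideanSpace.volume_preserving_symm_measurableEquiv_toLp (Fin 3)
  have e2 := MeasureTheory.volume_preserving_piFinSuccAbove (fun _ : Fin 3 => ℝ) 0
  have e3 := (MeasurePreserving.id (volume : Measure ℝ)).prod
    (volume_preserving_finTwoArrow ℝ)
  calc ∫⁻ y : EuclideanSpace ℝ (Fin 3), f (y 0, y 1, y 2)
      = ∫⁻ w : Fin 3 → ℝ, f (w 0, w 1, w 2) := by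
        rw [← e1.lintegral_comp_emb (MeasurableEquiv.toLp 2 (Fin 3 → ℝ)).symm.measurableEmbedding]
        rfl
    _ = ∫⁻ q : ℝ × (Fin 2 → ℝ), f (q.1, q.2 0, q.2 1) := by
        rw [← e2.lintegral_comp_emb (MeasurableEquiv.piFinSuccAbove (fun _ : Fin 3 => ℝ) 0).measurableEmbedding]
        rfl
    _ = ∫⁻ p : ℝ × ℝ × ℝ, f p := by
        rw [Measure.volume_eq_prod, Measure.volume_eq_prod, ← e3.lintegral_comp_emb
          ((MeasurableEquiv.refl ℝ).prodCongr (MeasurableEquiv.finTwoArrow)).measurableEmbedding]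
        rfl

lemma inner_plane (η₁ R z : ℝ) :
    ∫⁻ q : ℝ × ℝ, ENNReal.ofReal (Real.exp (-η₁ * Real.sqrt (z^2 + q.1^2 + q.2^2)) /
        Real.sqrt (z^2 + q.1^2 + q.2^2) * (1 / Real.sqrt ((z - R)^2 + q.1^2 + q.2^2)))
    = ENNReal.ofReal (2*π) * ∫⁻ u in Ioi |z|,
        ENNReal.ofReal (Real.exp (-η₁*u)) * ENNReal.ofReal (1 / Real.sqrt (u^2 + R^2 - 2*R*z)) := by
  set H : ℝ → ℝ≥0∞ := fun ρ => ENNReal.ofReal (Real.exp (-η₁ * Real.sqrt (z^2 + ρ^2)) /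
      Real.sqrt (z^2 + ρ^2) * (1 / Real.sqrt ((z - R)^2 + ρ^2))) with hH
  have hHmeas : Measurable H := by
    apply ENNReal.measurable_ofReal.comp
    apply Measurable.mul
    · exact (Real.measurable_exp.comp ((measurable_const.mul
        ((measurable_const.add (measurable_id.pow_const 2)).sqrt)))).div
        ((measurable_const.add (measurable_id.pow_const 2)).sqrt)
    · exact measurable_const.div ((measurable_const.add (measurable_id.pow_const 2)).sqrt)
  calc ∫⁻ q : ℝ × ℝ, ENNReal.ofReal (Real.exp (-η₁ * Real.sqrt (z^2 + q.1^2 + q.2^2)) /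
        Real.sqrt (z^2 + q.1^2 + q.2^2) * (1 / Real.sqrt ((z - R)^2 + q.1^2 + q.2^2)))
      = ∫⁻ p in polarCoord.target, ENNReal.ofReal p.1 * H p.1 := by
        rw [← lintegral_comp_polarCoord_symm']
        refine setLIntegral_congr_fun polarCoord.open_target.measurableSet
          (fun p hp => ?_)
        congr 1
        have hsymm : (polarCoord.symm p : ℝ × ℝ) = (p.1 * Real.cos p.2, p.1 * Real.sin p.2) := rfl
        have hsq : (p.1 * Real.cos p.2)^2 + (p.1 * Real.sin p.2)^2 = p.1^2 := by
          have := Real.sin_sq_add_cos_sq p.2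
          nlinarith [this]
        rw [hsymm, hH]
        dsimp only
        rw [add_assoc (z^2), add_assoc ((z-R)^2), hsq]
    _ = ∫⁻ ρ in Ioi (0:ℝ), ENNReal.ofReal (2*π) * (ENNReal.ofReal ρ * H ρ) := by
        rw [show polarCoord.target = Ioi (0:ℝ) ×ˢ Ioo (-π) π from rfl, Measure.volume_eq_prod, ← Measure.prod_restrict,
          lintegral_prod (fun p : ℝ × ℝ => ENNReal.ofReal p.1 * H p.1)
            (show Measurable (fun p : ℝ × ℝ => ENNReal.ofReal p.1 * H p.1) from
              (ENNReal.measurable_ofReal.comp measurable_fst).mul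
                (hHmeas.comp measurable_fst)).aemeasurable]
        refine lintegral_congr fun ρ => ?_
        dsimp only
        rw [setLIntegral_const, Real.volume_Ioo]
        rw [show π - -π = 2*π by ring]
        ring
    _ = ENNReal.ofReal (2*π) * ∫⁻ ρ in Ioi (0:ℝ), ENNReal.ofReal ρ * H ρ := by
        rw [lintegral_const_mul' _ _ ENNReal.ofReal_ne_top]
    _ = ENNReal.ofReal (2*π) * ∫⁻ u in Ioi |z|,
        ENNReal.ofReal (Real.exp (-η₁*u)) * ENNReal.ofReal (1 / Real.sqrt (u^2 + R^2 - 2*R*z)) := by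
        congr 1
        rw [sqrt_subst z (fun u => ENNReal.ofReal (Real.exp (-η₁*u)) *
          ENNReal.ofReal (1 / Real.sqrt (u^2 + R^2 - 2*R*z)))]
        refine setLIntegral_congr_fun measurableSet_Ioi
          (fun ρ hρ => ?_)
        have hρ0 : (0:ℝ) < ρ := hρ
        have hzρ : (0:ℝ) ≤ ρ^2 + z^2 := by positivity
        have hB : Real.sqrt (ρ^2+z^2) = Real.sqrt (z^2+ρ^2) := by rw [add_comm]
        have hC : Real.sqrt ((Real.sqrt (ρ^2+z^2))^2 + R^2 - 2*R*z)
            = Real.sqrt ((z-R)^2 + ρ^2) := by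
          rw [Real.sq_sqrt hzρ]; congr 1; ring
        rw [hH]
        dsimp only
        rw [← ENNReal.ofReal_mul (Real.exp_nonneg _),
          ← ENNReal.ofReal_mul (div_nonneg hρ0.le (Real.sqrt_nonneg _)),
          ← ENNReal.ofReal_mul hρ0.le]
        rw [hC, hB]
        congr 1
        have hBpos : 0 < Real.sqrt (z^2+ρ^2) := Real.sqrt_pos.2 (by positivity)
        field_simp

lemma outer_integral {η₁ R : ℝ} (h₁ : 0 < η₁) (hR : 0 < R) :
    ∫⁻ z : ℝ, ∫⁻ u in Ioi |z|,
        ENNReal.ofReal (Real.exp (-η₁*u)) * ENNReal.ofReal (1 / Real.sqrt (u^2 + R^2 - 2*R*z))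
      = ENNReal.ofReal (2 * (1 - Real.exp (-(η₁*R))) / (R * η₁^2)) := by
  set Kf : ℝ × ℝ → ℝ≥0∞ := fun p =>
    ENNReal.ofReal (Real.exp (-η₁*p.2)) * ENNReal.ofReal (1 / Real.sqrt (p.2^2 + R^2 - 2*R*p.1))
    with hKf
  have hKmeas : Measurable Kf := by
    apply Measurable.mul (f := fun p : ℝ × ℝ => ENNReal.ofReal (Real.exp (-η₁*p.2)))
      (g := fun p : ℝ × ℝ => ENNReal.ofReal (1 / Real.sqrt (p.2^2 + R^2 - 2*R*p.1)))
    · exact ENNReal.measurable_ofReal.comp (Real.measurable_exp.comp (measurable_snd.const_mul _))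
    · refine ENNReal.measurable_ofReal.comp (Measurable.div measurable_const ?_)
      exact ((((measurable_snd.pow_const 2).add_const (R^2)).sub
        ((measurable_fst.const_mul (2*R))))).sqrt
  have hS : MeasurableSet {p : ℝ × ℝ | |p.1| < p.2} :=
    measurableSet_lt (continuous_fst.abs.measurable) measurable_snd
  have hGmeas : Measurable ({p : ℝ × ℝ | |p.1| < p.2}.indicator Kf) :=
    hKmeas.indicator hS
  calc ∫⁻ z : ℝ, ∫⁻ u in Ioi |z|,
        ENNReal.ofReal (Real.exp (-η₁*u)) * ENNReal.ofReal (1 / Real.sqrt (u^2 + R^2 - 2*R*z))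
      = ∫⁻ z : ℝ, ∫⁻ u : ℝ, ({p : ℝ × ℝ | |p.1| < p.2}.indicator Kf) (z, u) := by
        refine lintegral_congr fun z => ?_
        rw [← lintegral_indicator measurableSet_Ioi]
        refine lintegral_congr fun u => ?_
        by_cases h : |z| < u
        · rw [Set.indicator_of_mem (show u ∈ Ioi |z| from mem_Ioi.2 h) (fun u => Kf (z,u)),
            Set.indicator_of_mem (show (z,u) ∈ {p : ℝ × ℝ | |p.1| < p.2} from h) Kf]
        · rw [Set.indicator_of_notMem (show u ∉ Ioi |z| from by simpa using h) (fun u => Kf (z,u)),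
            Set.indicator_of_notMem (show (z,u) ∉ {p : ℝ × ℝ | |p.1| < p.2} from h) Kf]
    _ = ∫⁻ u : ℝ, ∫⁻ z : ℝ, ({p : ℝ × ℝ | |p.1| < p.2}.indicator Kf) (z, u) := by
        have hGae : AEMeasurable
            (Function.uncurry fun z u => ({p : ℝ × ℝ | |p.1| < p.2}.indicator Kf) (z, u))
            ((volume : Measure ℝ).prod volume) := hGmeas.aemeasurable
        exact lintegral_lintegral_swap hGae
    _ = ∫⁻ u : ℝ, ∫⁻ z in Ioo (-u) u, Kf (z, u) := by
        refine lintegral_congr fun u => ?_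
        rw [← lintegral_indicator measurableSet_Ioo]
        refine lintegral_congr fun z => ?_
        by_cases h : |z| < u
        · rw [Set.indicator_of_mem (show (z,u) ∈ {p : ℝ × ℝ | |p.1| < p.2} from h) Kf,
            Set.indicator_of_mem (show z ∈ Ioo (-u) u from abs_lt.1 h) (fun z => Kf (z,u))]
        · rw [Set.indicator_of_notMem (show (z,u) ∉ {p : ℝ × ℝ | |p.1| < p.2} from h) Kf,
            Set.indicator_of_notMem
              (show z ∉ Ioo (-u) u from fun hc => h (abs_lt.2 hc)) (fun z => Kf (z,u))]
    _ = (∫⁻ u in Ioi (0:ℝ), ∫⁻ z in Ioo (-u) u, Kf (z, u))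
        + ∫⁻ u in (Ioi (0:ℝ))ᶜ, ∫⁻ z in Ioo (-u) u, Kf (z, u) := by
        rw [lintegral_add_compl _ measurableSet_Ioi]
    _ = ∫⁻ u in Ioi (0:ℝ), ∫⁻ z in Ioo (-u) u, Kf (z, u) := by
        have : ∫⁻ u in (Ioi (0:ℝ))ᶜ, ∫⁻ z in Ioo (-u) u, Kf (z, u) = 0 := by
          rw [compl_Ioi]
          rw [setLIntegral_congr_fun measurableSet_Iic
            (fun u hu => ?_), lintegral_zero]
          rw [Set.Ioo_eq_empty (by simp only [mem_Iic] at hu; intro hlt; linarith),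
            Measure.restrict_empty, lintegral_zero_measure]
        rw [this, add_zero]
    _ = ∫⁻ u in Ioi (0:ℝ), ENNReal.ofReal (Real.exp (-η₁*u) * ((u + R - |u-R|)/R)) := by
        have hne : ∀ᵐ u : ℝ ∂(volume.restrict (Ioi 0)), u ≠ R := by
          refine ae_restrict_of_ae ?_
          rw [ae_iff]
          have : {u : ℝ | ¬ u ≠ R} = {R} := by ext u; simp [Classical.not_not]
          rw [this]
          exact Real.volume_singleton
        have hmem : ∀ᵐ u : ℝ ∂(volume.restrict (Ioi 0)), u ∈ Ioi (0:ℝ) :=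
          ae_restrict_mem measurableSet_Ioi
        refine lintegral_congr_ae ((hne.and hmem).mono fun u hu => ?_)
        obtain ⟨hneR, hu0⟩ := hu
        have hu0' : (0:ℝ) < u := hu0
        have hpos : ∀ z ∈ Set.uIcc (-u) u, 0 < u^2+R^2-2*R*z := by
          intro z hz
          rw [Set.uIcc_of_le (by linarith)] at hz
          have h2 : (0:ℝ) < (u-R)^2 := by
            have h := sub_ne_zero.2 hneR
            positivity
          nlinarith [hz.2]
        have hcont : ContinuousOn (fun z : ℝ => 1 / Real.sqrt (u^2+R^2-2*R*z))
            (Set.Icc (-u) u) := by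
          refine ContinuousOn.div continuousOn_const ?_ ?_
          · exact (continuousOn_const.sub (continuousOn_const.mul continuousOn_id)).sqrt
          · intro z hz
            refine (Real.sqrt_pos.2 (hpos z ?_)).ne'
            rwa [Set.uIcc_of_le (by linarith)]
        have hint : IntegrableOn (fun z : ℝ => 1 / Real.sqrt (u^2+R^2-2*R*z))
            (Ioo (-u) u) volume :=
          (hcont.integrableOn_Icc).mono_set Set.Ioo_subset_Icc_self
        calc ∫⁻ z in Ioo (-u) u, Kf (z, u)
            = ENNReal.ofReal (Real.exp (-η₁*u)) *
              ∫⁻ z in Ioo (-u) u, ENNReal.ofReal (1 / Real.sqrt (u^2 + R^2 - 2*R*z)) := by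
              rw [hKf, ← lintegral_const_mul' _ _ ENNReal.ofReal_ne_top]
          _ = ENNReal.ofReal (Real.exp (-η₁*u)) *
              ENNReal.ofReal (∫ z in Ioo (-u) u, 1 / Real.sqrt (u^2 + R^2 - 2*R*z)) := by
              rw [← ofReal_integral_eq_lintegral_ofReal hint
                (Filter.Eventually.of_forall fun z => by positivity)]
          _ = ENNReal.ofReal (Real.exp (-η₁*u) * ((u + R - |u-R|)/R)) := by
              rw [← ENNReal.ofReal_mul (Real.exp_nonneg _)]
              congr 2
              have h1 : ∫ z in Ioo (-u) u, 1 / Real.sqrt (u^2 + R^2 - 2*R*z)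
                  = ∫ z in (-u)..u, 1 / Real.sqrt (u^2 + R^2 - 2*R*z) := by
                rw [intervalIntegral.integral_of_le (by linarith), integral_Ioc_eq_integral_Ioo]
              rw [h1]
              have := inner_z_integral hR hu0' hneR
              simp only [one_div]
              rw [this]
    _ = ENNReal.ofReal (2 * (1 - Real.exp (-(η₁*R))) / (R * η₁^2)) := by
        rw [← Set.Ioc_union_Ioi_eq_Ioi hR.le,
          lintegral_union measurableSet_Ioi (Set.Ioc_disjoint_Ioi le_rfl)]
        have p1 : ∫⁻ u in Ioc (0:ℝ) R, ENNReal.ofReal (Real.exp (-η₁*u) * ((u + R - |u-R|)/R))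
            = ENNReal.ofReal ((2/R) * ((1 - Real.exp (-(η₁*R))*(1+η₁*R))/η₁^2)) := by
          have hcong : ∀ u ∈ Ioc (0:ℝ) R,
              ENNReal.ofReal (Real.exp (-η₁*u) * ((u + R - |u-R|)/R))
                = ENNReal.ofReal ((2/R) * (u * Real.exp (-(η₁*u)))) := by
            intro u hu
            congr 1
            rw [abs_of_nonpos (by linarith [hu.2])]
            rw [show -η₁*u = -(η₁*u) by ring]
            field_simp
            ring
          rw [setLIntegral_congr_fun measurableSet_Ioc
            hcong]
          have hint2 : IntegrableOn (fun u : ℝ => (2/R) * (u * Real.exp (-(η₁*u))))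
              (Ioc 0 R) volume := by
            apply Continuous.integrableOn_Ioc
            continuity
          rw [← ofReal_integral_eq_lintegral_ofReal hint2
            ((ae_restrict_mem measurableSet_Ioc).mono fun u hu => by
              have hu0 : (0:ℝ) < u := hu.1
              positivity)]
          congr 1
          rw [integral_const_mul, ← intervalIntegral.integral_of_le hR.le, exp_mid h₁ R]
        have p2 : ∫⁻ u in Ioi R, ENNReal.ofReal (Real.exp (-η₁*u) * ((u + R - |u-R|)/R))
            = ENNReal.ofReal (2 * (Real.exp (-(η₁*R))/η₁)) := by
          have hcong : ∀ u ∈ Ioi R,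
              ENNReal.ofReal (Real.exp (-η₁*u) * ((u + R - |u-R|)/R))
                = ENNReal.ofReal (2 * Real.exp (-(η₁*u))) := by
            intro u hu
            congr 1
            rw [abs_of_nonneg (by linarith [mem_Ioi.1 hu] : (0:ℝ) ≤ u - R)]
            rw [show -η₁*u = -(η₁*u) by ring]
            field_simp
            ring
          rw [setLIntegral_congr_fun measurableSet_Ioi hcong]
          have hint3 : IntegrableOn (fun u : ℝ => 2 * Real.exp (-(η₁*u))) (Ioi R) volume := by
            have := (exp_neg_integrableOn_Ioi R h₁).const_mul 2
            simpa [neg_mul, IntegrableOn] using this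
          rw [← ofReal_integral_eq_lintegral_ofReal hint3
            (Filter.Eventually.of_forall fun u => by positivity)]
          congr 1
          rw [integral_const_mul, exp_tail h₁ R]
        have hA : 0 ≤ 1 - Real.exp (-(η₁*R))*(1+η₁*R) := by
          have h := Real.add_one_le_exp (η₁*R)
          have hE : (0:ℝ) < Real.exp (η₁*R) := Real.exp_pos _
          have h2 : (Real.exp (η₁*R))⁻¹ * (1+η₁*R) ≤ (Real.exp (η₁*R))⁻¹ * Real.exp (η₁*R) :=
            mul_le_mul_of_nonneg_left (by linarith) (inv_nonneg.2 hE.le)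
          rw [inv_mul_cancel₀ hE.ne'] at h2
          rw [Real.exp_neg]
          linarith
        rw [p1, p2, ← ENNReal.ofReal_add (by positivity) (by positivity)]
        congr 1
        field_simp
        ring

theorem yukawa_coulomb_convolution (η₁ : ℝ) (h₁ : 0 < η₁)
    (x₂ : EuclideanSpace ℝ (Fin 3)) (hx₂ : x₂ ≠ 0) :
    ∫ x₁ : EuclideanSpace ℝ (Fin 3),
        (Real.exp (-η₁ * ‖x₁‖) / ‖x₁‖) * (1 / ‖x₁ - x₂‖) =
      4 * π * (1 - Real.exp (-η₁ * ‖x₂‖)) / (‖x₂‖ * η₁ ^ 2) := by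
  have hR : 0 < ‖x₂‖ := norm_pos_iff.2 hx₂
  set R := ‖x₂‖ with hRdef
  have hFnn : ∀ x : EuclideanSpace ℝ (Fin 3),
      0 ≤ Real.exp (-η₁ * ‖x‖) / ‖x‖ * (1 / ‖x - x₂‖) := fun x => by positivity
  have hFmeas : AEStronglyMeasurable
      (fun x : EuclideanSpace ℝ (Fin 3) => Real.exp (-η₁ * ‖x‖) / ‖x‖ * (1 / ‖x - x₂‖))
      volume := by
    refine Measurable.aestronglyMeasurable ?_
    exact ((Real.measurable_exp.comp (measurable_norm.const_mul (-η₁))).div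
      measurable_norm).mul
      (measurable_const.div ((measurable_id.sub measurable_const).norm))
  rw [integral_eq_lintegral_of_nonneg_ae (Filter.Eventually.of_forall hFnn) hFmeas]
  have hg3meas : Measurable (fun p : ℝ × ℝ × ℝ =>
      ENNReal.ofReal (Real.exp (-η₁ * Real.sqrt (p.1^2 + p.2.1^2 + p.2.2^2)) /
        Real.sqrt (p.1^2 + p.2.1^2 + p.2.2^2) *
        (1 / Real.sqrt ((p.1 - R)^2 + p.2.1^2 + p.2.2^2)))) := by
    have s1 : Measurable (fun p : ℝ × ℝ × ℝ => p.1^2 + p.2.1^2 + p.2.2^2) :=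
      ((measurable_fst.pow_const 2).add
        ((measurable_fst.comp measurable_snd).pow_const 2)).add
        ((measurable_snd.comp measurable_snd).pow_const 2)
    have s2 : Measurable (fun p : ℝ × ℝ × ℝ => (p.1 - R)^2 + p.2.1^2 + p.2.2^2) :=
      (((measurable_fst.sub_const R).pow_const 2).add
        ((measurable_fst.comp measurable_snd).pow_const 2)).add
        ((measurable_snd.comp measurable_snd).pow_const 2)
    exact ENNReal.measurable_ofReal.comp
      (((Real.measurable_exp.comp (s1.sqrt.const_mul (-η₁))).div s1.sqrt).mul
        (measurable_const.div s2.sqrt))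
  have key : ∫⁻ x : EuclideanSpace ℝ (Fin 3),
      ENNReal.ofReal (Real.exp (-η₁ * ‖x‖) / ‖x‖ * (1 / ‖x - x₂‖))
      = ENNReal.ofReal (4 * π * (1 - Real.exp (-η₁ * R)) / (R * η₁ ^ 2)) := by
    calc ∫⁻ x : EuclideanSpace ℝ (Fin 3),
        ENNReal.ofReal (Real.exp (-η₁ * ‖x‖) / ‖x‖ * (1 / ‖x - x₂‖))
        = ∫⁻ y : EuclideanSpace ℝ (Fin 3),
          ENNReal.ofReal (Real.exp (-η₁ * Real.sqrt ((y 0)^2 + (y 1)^2 + (y 2)^2)) /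
            Real.sqrt ((y 0)^2 + (y 1)^2 + (y 2)^2) *
            (1 / Real.sqrt ((y 0 - R)^2 + (y 1)^2 + (y 2)^2))) := by
          have hv : Orthonormal ℝ (({0} : Set (Fin 3)).restrict (fun _ : Fin 3 => R⁻¹ • x₂)) := by
            rw [orthonormal_iff_ite]
            intro i j
            have hij : i = j := Subtype.ext (by
              have hi := i.2; have hj := j.2
              simp only [Set.mem_singleton_iff] at hi hj
              rw [hi, hj])
            subst hij
            simp only [Set.restrict_apply, if_pos rfl]
            show inner ℝ (R⁻¹ • x₂) (R⁻¹ • x₂) = (1:ℝ)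
            rw [real_inner_smul_left, real_inner_smul_right, real_inner_self_eq_norm_sq]
            field_simp
            ring
          obtain ⟨b, hb0⟩ := hv.exists_orthonormalBasis_extension_of_card_eq
            (by simp [finrank_euclideanSpace])
          have hb00 : b 0 = R⁻¹ • x₂ := hb0 0 rfl
          have hx : b.repr x₂ = EuclideanSpace.single 0 R := by
            have : x₂ = R • b 0 := by
              rw [hb00, smul_smul, mul_inv_cancel₀ hR.ne', one_smul]
            rw [this, _root_.map_smul, b.repr_self]
            ext i
            rw [PiLp.smul_apply, EuclideanSpace.single_apply, EuclideanSpace.single_apply]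
            split <;> simp
          have hemb : MeasurableEmbedding
              (b.repr.symm : EuclideanSpace ℝ (Fin 3) → EuclideanSpace ℝ (Fin 3)) :=
            b.repr.symm.toHomeomorph.measurableEmbedding
          rw [← (b.measurePreserving_repr_symm).lintegral_comp_emb hemb]
          refine lintegral_congr fun y => ?_
          congr 1
          have h1 : ‖(b.repr.symm y : EuclideanSpace ℝ (Fin 3))‖
              = Real.sqrt ((y 0)^2 + (y 1)^2 + (y 2)^2) := by
            rw [b.repr.symm.norm_map, EuclideanSpace.norm_eq, Fin.sum_univ_three]
            simp [Real.norm_eq_abs, sq_abs]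
          have h2 : ‖(b.repr.symm y : EuclideanSpace ℝ (Fin 3)) - x₂‖
              = Real.sqrt ((y 0 - R)^2 + (y 1)^2 + (y 2)^2) := by
            have : (b.repr.symm y : EuclideanSpace ℝ (Fin 3)) - x₂
                = b.repr.symm (y - EuclideanSpace.single 0 R) := by
              rw [map_sub, ← hx, b.repr.symm_apply_apply]
            rw [this, b.repr.symm.norm_map, EuclideanSpace.norm_eq, Fin.sum_univ_three]
            congr 1
            simp [PiLp.sub_apply, EuclideanSpace.single_apply, Real.norm_eq_abs, sq_abs]
          rw [h1, h2]
      _ = ∫⁻ p : ℝ × ℝ × ℝ,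
          ENNReal.ofReal (Real.exp (-η₁ * Real.sqrt (p.1^2 + p.2.1^2 + p.2.2^2)) /
            Real.sqrt (p.1^2 + p.2.1^2 + p.2.2^2) *
            (1 / Real.sqrt ((p.1 - R)^2 + p.2.1^2 + p.2.2^2))) :=
          lintegral_euclidean_three (fun p : ℝ × ℝ × ℝ =>
            ENNReal.ofReal (Real.exp (-η₁ * Real.sqrt (p.1^2 + p.2.1^2 + p.2.2^2)) /
              Real.sqrt (p.1^2 + p.2.1^2 + p.2.2^2) *
              (1 / Real.sqrt ((p.1 - R)^2 + p.2.1^2 + p.2.2^2))))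
      _ = ∫⁻ z : ℝ, ∫⁻ q : ℝ × ℝ,
          ENNReal.ofReal (Real.exp (-η₁ * Real.sqrt (z^2 + q.1^2 + q.2^2)) /
            Real.sqrt (z^2 + q.1^2 + q.2^2) *
            (1 / Real.sqrt ((z - R)^2 + q.1^2 + q.2^2))) := by
          rw [Measure.volume_eq_prod, lintegral_prod _ hg3meas.aemeasurable]
      _ = ∫⁻ z : ℝ, ENNReal.ofReal (2*π) * ∫⁻ u in Ioi |z|,
          ENNReal.ofReal (Real.exp (-η₁*u)) *
            ENNReal.ofReal (1 / Real.sqrt (u^2 + R^2 - 2*R*z)) := by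
          exact lintegral_congr fun z => inner_plane η₁ R z
      _ = ENNReal.ofReal (2*π) * ∫⁻ z : ℝ, ∫⁻ u in Ioi |z|,
          ENNReal.ofReal (Real.exp (-η₁*u)) *
            ENNReal.ofReal (1 / Real.sqrt (u^2 + R^2 - 2*R*z)) := by
          rw [lintegral_const_mul' _ _ ENNReal.ofReal_ne_top]
      _ = ENNReal.ofReal (2*π) * ENNReal.ofReal (2 * (1 - Real.exp (-(η₁*R))) / (R * η₁^2)) := by
          rw [outer_integral h₁ hR]
      _ = ENNReal.ofReal (4 * π * (1 - Real.exp (-η₁ * R)) / (R * η₁ ^ 2)) := by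
          rw [← ENNReal.ofReal_mul (by positivity)]
          congr 1
          rw [show -η₁ * R = -(η₁*R) by ring]
          field_simp
          ring
  rw [key, ENNReal.toReal_ofReal]
  have h1e : 0 ≤ 1 - Real.exp (-η₁ * R) := by
    have : Real.exp (-η₁ * R) ≤ 1 := by
      rw [Real.exp_le_one_iff]
      nlinarith
    linarith
  positivity
end

section
/- For positive reals R₁, R₂, η₁, η₂: (e^{-R₁η₁}/R₁)(e^{-R₂η₂}/R₂) = (1/π) ∫₀^∞ √(ζη₂² + η₁²) · K₁(√(R₁² + R₂²/ζ) · √(η₁² + ζη₂²)) / (ζ^{3/2} √(R₁² + R₂²/ζ)) dζ, where K₁ is the modified Bessel function of the second kind of order 1. -/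
open MeasureTheory Real

set_option maxHeartbeats 1000000

open Set

lemma image_inv_c (c : ℝ) (hc : 0 < c) : (fun u : ℝ => c / u) '' Ioi 0 = Ioi 0 := by
  ext v
  constructor
  · rintro ⟨u, hu, rfl⟩
    exact div_pos hc hu
  · intro hv
    exact ⟨c / v, div_pos hc hv, by field_simp⟩

lemma image_sq : (fun u : ℝ => u ^ 2) '' Ioi 0 = Ioi 0 := by
  ext v
  constructor
  · rintro ⟨u, hu, rfl⟩
    exact pow_pos (show (0:ℝ) < u from hu) 2
  · intro hv
    exact ⟨Real.sqrt v, Real.sqrt_pos.2 hv, Real.sq_sqrt hv.le⟩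

lemma image_cexp (c : ℝ) (hc : 0 < c) : (fun t : ℝ => c * Real.exp t) '' univ = Ioi 0 := by
  ext v
  constructor
  · rintro ⟨t, -, rfl⟩
    exact mul_pos hc (Real.exp_pos t)
  · intro hv
    refine ⟨Real.log (v / c), mem_univ _, ?_⟩
    show c * Real.exp (Real.log (v / c)) = v
    rw [Real.exp_log (div_pos hv hc)]
    field_simp

lemma image_glasser (p q : ℝ) (hp : 0 < p) (hq : 0 < q) :
    (fun u : ℝ => p * u - q / u) '' Ioi 0 = univ := by
  ext v
  simp only [mem_univ, iff_true, mem_image]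
  set s := Real.sqrt (v ^ 2 + 4 * p * q) with hs
  have hs2 : s ^ 2 = v ^ 2 + 4 * p * q := Real.sq_sqrt (by positivity)
  have hsv : |v| < s := by
    rw [← Real.sqrt_sq_eq_abs]
    exact Real.sqrt_lt_sqrt (by positivity) (by nlinarith)
  have h1 : 0 < v + s := by
    rcases abs_lt.1 hsv with ⟨h, _⟩; linarith
  refine ⟨(v + s) / (2 * p), div_pos h1 (by positivity), ?_⟩
  field_simp
  nlinarith [hs2]

lemma hasDeriv_glasser (p q : ℝ) (u : ℝ) (hu : u ∈ Ioi (0:ℝ)) :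
    HasDerivWithinAt (fun u : ℝ => p * u - q / u) (p + q / u ^ 2) (Ioi 0) u := by
  have hu' : (u:ℝ) ≠ 0 := ne_of_gt hu
  have h1 : HasDerivAt (fun u : ℝ => p * u) p u := by
    simpa using (hasDerivAt_id u).const_mul p
  have h2 : HasDerivAt (fun u : ℝ => q / u) (-(q / u ^ 2)) u := by
    have := (hasDerivAt_inv hu').const_mul q
    simpa [div_eq_mul_inv, neg_div, mul_div_assoc] using this
  have := h1.sub h2
  have h3 := this.hasDerivWithinAt (s := Ioi 0)
  simp only [sub_neg_eq_add] at h3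
  exact h3

lemma injOn_glasser (p q : ℝ) (hp : 0 < p) (hq : 0 < q) :
    InjOn (fun u : ℝ => p * u - q / u) (Ioi 0) := by
  intro u hu v hv h
  simp only [mem_Ioi] at hu hv
  have hu' : u ≠ 0 := ne_of_gt hu
  have hv' : v ≠ 0 := ne_of_gt hv
  simp only at h
  field_simp at h
  have h3 : (u - v) * (p * u * v + q) = 0 := by linear_combination h
  rcases mul_eq_zero.1 h3 with h4 | h4
  · linarith [sub_eq_zero.1 h4]
  · nlinarith [mul_pos (mul_pos hp hu) hv]

lemma injOn_invc (c : ℝ) (hc : 0 < c) : InjOn (fun u : ℝ => c / u) (Ioi 0) := by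
  intro u hu v hv h
  simp only [mem_Ioi] at hu hv
  simp only at h
  field_simp at h
  linarith

lemma hasDeriv_invc (c : ℝ) (u : ℝ) (hu : u ∈ Ioi (0:ℝ)) :
    HasDerivWithinAt (fun u : ℝ => c / u) (-(c / u ^ 2)) (Ioi 0) u := by
  have hu' : (u:ℝ) ≠ 0 := ne_of_gt hu
  have := (hasDerivAt_inv hu').const_mul c
  simpa [div_eq_mul_inv, neg_div, mul_div_assoc] using this.hasDerivWithinAt

lemma integrableOn_E (a b : ℝ) (ha : 0 < a) (hb : 0 ≤ b) :
    IntegrableOn (fun u : ℝ => Real.exp (-(a * u ^ 2 + b / u ^ 2))) (Ioi 0) := by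
  refine ((integrable_exp_neg_mul_sq ha).integrableOn).mono' ?_ ?_
  · refine (Measurable.aestronglyMeasurable ?_)
    fun_prop
  · filter_upwards with u
    rw [Real.norm_eq_abs, abs_of_pos (Real.exp_pos _)]
    apply Real.exp_le_exp.2
    have : 0 ≤ b / u ^ 2 := div_nonneg hb (sq_nonneg u)
    linarith

lemma glasser (a b : ℝ) (ha : 0 < a) (hb : 0 < b) :
    ∫ u in Ioi (0:ℝ), Real.exp (-(a * u ^ 2 + b / u ^ 2)) =
      Real.sqrt (π / a) / 2 * Real.exp (-(2 * Real.sqrt (a * b))) := by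
  obtain ⟨p, hp, hp2⟩ : ∃ p : ℝ, 0 < p ∧ p ^ 2 = a :=
    ⟨Real.sqrt a, Real.sqrt_pos.2 ha, Real.sq_sqrt ha.le⟩
  obtain ⟨q, hq, hq2⟩ : ∃ q : ℝ, 0 < q ∧ q ^ 2 = b :=
    ⟨Real.sqrt b, Real.sqrt_pos.2 hb, Real.sq_sqrt hb.le⟩
  have hpq : Real.sqrt (a * b) = p * q := by
    rw [← hp2, ← hq2, ← mul_pow, Real.sqrt_sq (by positivity)]
  have hpa : Real.sqrt a = p := by rw [← hp2, Real.sqrt_sq hp.le]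
  set E : ℝ → ℝ := fun u => Real.exp (-(a * u ^ 2 + b / u ^ 2)) with hE
  set X : ℝ := 2 * Real.sqrt (a * b) with hX
  have hXpq : X = 2 * (p * q) := by rw [hX, hpq]
  set c : ℝ := q / p with hc
  have hcpos : 0 < c := div_pos hq hp
  have hc' : c ≠ 0 := ne_of_gt hcpos
  have hac : a * c ^ 2 = b := by
    rw [hc, div_pow, ← mul_div_assoc, div_eq_iff (by positivity), hq2, hp2]
    ring
  have hEc : ∀ u ∈ Ioi (0:ℝ), E (c / u) = E u := by
    intro u hu
    simp only [mem_Ioi] at hu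
    have hu' : u ≠ 0 := ne_of_gt hu
    simp only [hE]
    congr 1
    have h5 : b / c ^ 2 = a := by
      rw [← hac, mul_div_assoc, div_self (pow_ne_zero 2 hc'), mul_one]
    rw [div_pow c u, ← mul_div_assoc, div_div_eq_mul_div, hac,
      mul_div_right_comm, h5]
    ring
  have hIint : IntegrableOn E (Ioi 0) := integrableOn_E a b ha hb.le
  -- substitution u ↦ c/u
  have hiff := integrableOn_image_iff_integrableOn_abs_deriv_smul measurableSet_Ioi
      (hasDeriv_invc c) (injOn_invc c hcpos) E
  rw [image_inv_c c hcpos] at hiff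
  have habs : ∀ u ∈ Ioi (0:ℝ), |(-(c / u ^ 2))| • E (c / u) = c * (E u / u ^ 2) := by
    intro u hu
    simp only [mem_Ioi] at hu
    rw [smul_eq_mul, abs_neg, abs_of_pos (div_pos hcpos (by positivity)), hEc u hu]
    field_simp
  have h10 : IntegrableOn (fun u => c * (E u / u ^ 2)) (Ioi 0) :=
    ((hiff.1 hIint).congr_fun habs measurableSet_Ioi)
  have hJint : IntegrableOn (fun u => E u / u ^ 2) (Ioi 0) := by
    have h11 := h10.const_mul c⁻¹
    refine IntegrableOn.congr_fun h11 (fun u _ => ?_) measurableSet_Ioi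
    field_simp
  have sub2 := integral_image_eq_integral_abs_deriv_smul measurableSet_Ioi
      (hasDeriv_invc c) (injOn_invc c hcpos) E
  rw [image_inv_c c hcpos] at sub2
  rw [setIntegral_congr_fun measurableSet_Ioi habs, MeasureTheory.integral_const_mul] at sub2
  -- sub2 : ∫ E = c * ∫ (E u / u^2)
  -- main substitution
  have key := integral_image_eq_integral_abs_deriv_smul measurableSet_Ioi
      (hasDeriv_glasser p q) (injOn_glasser p q hp hq)
      (fun v => Real.exp (-v ^ 2))
  rw [image_glasser p q hp hq, Measure.restrict_univ] at key
  have hgauss : (∫ v : ℝ, Real.exp (-v ^ 2)) = Real.sqrt π := by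
    have := integral_gaussian 1
    simpa using this
  have hpt : ∀ u ∈ Ioi (0:ℝ), |p + q / u ^ 2| • Real.exp (-(p * u - q / u) ^ 2)
      = Real.exp X * (p * E u + q * (E u / u ^ 2)) := by
    intro u hu
    simp only [mem_Ioi] at hu
    have hu' : u ≠ 0 := ne_of_gt hu
    have hsq : (p * u - q / u) ^ 2 = a * u ^ 2 + b / u ^ 2 - X := by
      have h7 : q / u * u = q := div_mul_cancel₀ q hu'
      rw [hXpq, ← hp2, ← hq2]
      field_simp
      ring
    rw [smul_eq_mul, abs_of_pos (by positivity), hsq, neg_sub, sub_eq_add_neg,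
      Real.exp_add]
    show (p + q / u ^ 2) * (Real.exp X * E u) = _
    ring
  have key2 : Real.sqrt π = Real.exp X *
      (p * (∫ u in Ioi (0:ℝ), E u) + q * ∫ u in Ioi (0:ℝ), E u / u ^ 2) := by
    rw [← hgauss, key, setIntegral_congr_fun measurableSet_Ioi hpt,
      MeasureTheory.integral_const_mul]
    congr 1
    rw [integral_add (hIint.const_mul p) (hJint.const_mul q),
      MeasureTheory.integral_const_mul, MeasureTheory.integral_const_mul]
  have hq' : q = c * p := by rw [hc]; field_simp
  have hqJ : q * (∫ u in Ioi (0:ℝ), E u / u ^ 2) = p * ∫ u in Ioi (0:ℝ), E u := by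
    rw [sub2, hq']; ring
  rw [hqJ] at key2
  have hXne : Real.exp X ≠ 0 := Real.exp_ne_zero X
  have h12 : (∫ u in Ioi (0:ℝ), E u) * (2 * p * Real.exp X) = Real.sqrt π := by
    rw [key2]; ring
  have hdiv : Real.sqrt (π / a) = Real.sqrt π / p := by
    rw [Real.sqrt_div pi_pos.le, hpa]
  rw [hdiv, ← h12, Real.exp_neg]
  field_simp

lemma rpow_sq_pos (u : ℝ) (hu : 0 < u) : ((u ^ 2 : ℝ)) ^ (-(1:ℝ)/2) = u⁻¹ := by
  rw [show (-(1:ℝ)/2) = -(1/2) by ring, Real.rpow_neg (sq_nonneg u),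
    ← Real.sqrt_eq_rpow, Real.sqrt_sq hu.le]

lemma int_half (a b : ℝ) (ha : 0 < a) (hb : 0 < b) :
    ∫ s in Ioi (0:ℝ), s ^ (-(1:ℝ)/2) * Real.exp (-(a * s + b / s)) =
      Real.sqrt (π / a) * Real.exp (-(2 * Real.sqrt (a * b))) := by
  have hderiv : ∀ u ∈ Ioi (0:ℝ), HasDerivWithinAt (fun u : ℝ => u ^ 2) (2 * u) (Ioi 0) u := by
    intro u _
    simpa using (hasDerivAt_pow 2 u).hasDerivWithinAt
  have hinj : InjOn (fun u : ℝ => u ^ 2) (Ioi 0) := by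
    intro u hu v hv h
    simp only [mem_Ioi] at hu hv
    simp only at h
    nlinarith
  have key := integral_image_eq_integral_abs_deriv_smul measurableSet_Ioi hderiv hinj
      (fun s : ℝ => s ^ (-(1:ℝ)/2) * Real.exp (-(a * s + b / s)))
  rw [image_sq] at key
  rw [key, setIntegral_congr_fun measurableSet_Ioi
    (g := fun u : ℝ => 2 * Real.exp (-(a * u ^ 2 + b / u ^ 2)))]
  · rw [MeasureTheory.integral_const_mul, glasser a b ha hb]
    ring
  · intro u hu
    simp only [mem_Ioi] at hu
    have hu' : u ≠ 0 := ne_of_gt hu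
    simp only [smul_eq_mul]
    rw [abs_of_pos (by positivity), rpow_sq_pos u hu]
    field_simp

lemma int_threehalf (a b : ℝ) (ha : 0 < a) (hb : 0 < b) :
    ∫ s in Ioi (0:ℝ), s ^ (-(3:ℝ)/2) * Real.exp (-(a * s + b / s)) =
      Real.sqrt (π / b) * Real.exp (-(2 * Real.sqrt (a * b))) := by
  have key := integral_image_eq_integral_abs_deriv_smul measurableSet_Ioi
      (hasDeriv_invc 1) (injOn_invc 1 one_pos)
      (fun s : ℝ => s ^ (-(1:ℝ)/2) * Real.exp (-(b * s + a / s)))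
  rw [image_inv_c 1 one_pos] at key
  have hpt : ∀ u ∈ Ioi (0:ℝ), |(-(1 / u ^ 2))| •
      ((1/u) ^ (-(1:ℝ)/2) * Real.exp (-(b * (1/u) + a / (1/u))))
      = u ^ (-(3:ℝ)/2) * Real.exp (-(a * u + b / u)) := by
    intro u hu
    simp only [mem_Ioi] at hu
    have hu' : u ≠ 0 := ne_of_gt hu
    have h1 : (1/u : ℝ) ^ (-(1:ℝ)/2) = u ^ ((1:ℝ)/2) := by
      rw [one_div, ← Real.rpow_neg_one u, ← Real.rpow_mul hu.le]
      norm_num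
    have harg : b * (1/u) + a / (1/u) = a * u + b / u := by
      field_simp
      ring
    have h2 : (1:ℝ)/u^2 = u ^ (-2:ℝ) := by
      rw [Real.rpow_neg hu.le, one_div]
      congr 1
      rw [← Real.rpow_natCast u 2]
      norm_num
    simp only [smul_eq_mul]
    rw [h1, harg, abs_neg, abs_of_pos (by positivity), h2, ← mul_assoc,
      ← Real.rpow_add hu]
    norm_num
  rw [setIntegral_congr_fun measurableSet_Ioi hpt] at key
  rw [← key, int_half b a hb ha, mul_comm b a]

lemma integrableOn_rpow_exp (a b p : ℝ) (ha : 0 < a) (hb : 0 < b)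
    (hp0 : 0 ≤ p) (hp2 : p ≤ 2) :
    IntegrableOn (fun s : ℝ => s ^ (-p) * Real.exp (-(a * s + b / s))) (Ioi 0) := by
  refine ((exp_neg_integrableOn_Ioi 0 ha).const_mul (1 + 4 / b ^ 2)).mono' ?_ ?_
  · refine Measurable.aestronglyMeasurable ?_
    fun_prop
  · filter_upwards [ae_restrict_mem measurableSet_Ioi] with s hs
    simp only [mem_Ioi] at hs
    have hs' : s ≠ 0 := ne_of_gt hs
    have hrp : (0:ℝ) ≤ s ^ (-p) := Real.rpow_nonneg hs.le _
    rw [Real.norm_eq_abs, abs_of_nonneg (by positivity)]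
    have hsplit : Real.exp (-(a * s + b / s)) =
        Real.exp (-(b / s)) * Real.exp (-(a * s)) := by
      rw [← Real.exp_add]; ring_nf
    rw [hsplit, ← mul_assoc]
    have hkey : s ^ (-p) * Real.exp (-(b / s)) ≤ 1 + 4 / b ^ 2 := by
      rcases le_or_gt 1 s with h | h
      · have h1 : s ^ (-p) ≤ 1 :=
          Real.rpow_le_one_of_one_le_of_nonpos h (neg_nonpos.2 hp0)
        have h2 : Real.exp (-(b / s)) ≤ 1 := by
          rw [Real.exp_le_one_iff]
          have : 0 ≤ b / s := by positivity
          linarith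
        have hb2 : 0 < 4 / b ^ 2 := by positivity
        nlinarith [Real.exp_pos (-(b/s))]
      · have hy : 0 < b / s := div_pos hb hs
        have h3 : (b/s)/2 + 1 ≤ Real.exp ((b/s)/2) := Real.add_one_le_exp _
        have h4 : (b/s)^2/4 ≤ Real.exp (b/s) := by
          have h4' : Real.exp (b/s) = Real.exp ((b/s)/2) * Real.exp ((b/s)/2) := by
            rw [← Real.exp_add]; ring_nf
          nlinarith [Real.exp_pos ((b/s)/2)]
        have h6 : b^2/(4*s^2) ≤ Real.exp (b/s) := by
          have : b^2/(4*s^2) = (b/s)^2/4 := by field_simp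
          linarith [this ▸ h4]
        have hexp : Real.exp (-(b/s)) ≤ 4 * s^2 / b^2 := by
          rw [Real.exp_neg]
          have h7 := inv_anti₀ (by positivity : (0:ℝ) < b^2/(4*s^2)) h6
          calc (Real.exp (b/s))⁻¹ ≤ (b^2/(4*s^2))⁻¹ := h7
            _ = 4 * s^2 / b^2 := by rw [inv_div]
        have hs2R : s ^ ((2:ℝ)) = s ^ 2 := by
          rw [← Real.rpow_natCast s 2]; norm_num
        have hs2 : s ^ (-p) * (4 * s^2/b^2) = 4 * s^(2 - p) / b^2 := by
          rw [show (2:ℝ) - p = -p + 2 by ring, Real.rpow_add hs, hs2R]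
          ring
        have h8 : s ^ ((2:ℝ) - p) ≤ 1 := Real.rpow_le_one hs.le h.le (by linarith)
        calc s ^ (-p) * Real.exp (-(b/s)) ≤ s ^ (-p) * (4 * s^2/b^2) := by
              apply mul_le_mul_of_nonneg_left hexp hrp
          _ = 4 * s^(2-p)/b^2 := hs2
          _ ≤ 4 / b^2 := by
              rw [div_le_div_iff₀ (by positivity) (by positivity)]
              nlinarith [h8]
          _ ≤ 1 + 4 / b^2 := by linarith
    calc s ^ (-p) * Real.exp (-(b/s)) * Real.exp (-(a*s))
        ≤ (1 + 4/b^2) * Real.exp (-(a*s)) :=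
          mul_le_mul_of_nonneg_right hkey (Real.exp_pos _).le
      _ = (1 + 4/b^2) * Real.exp (-a * s) := by ring_nf

/-- The modified Bessel function of the second kind (Macdonald function) of order `ν`,
via its standard integral representation `K_ν(x) = ∫₀^∞ exp (-x cosh t) cosh (ν t) dt`. -/
noncomputable def besselK (ν x : ℝ) : ℝ :=
  ∫ t in Set.Ioi (0:ℝ), Real.exp (-x * Real.cosh t) * Real.cosh (ν * t)

lemma integrableOn_E1 (a b : ℝ) (ha : 0 < a) (hb : 0 ≤ b) :
    IntegrableOn (fun s : ℝ => Real.exp (-(a * s + b / s))) (Ioi 0) := by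
  refine (exp_neg_integrableOn_Ioi 0 ha).mono' ?_ ?_
  · exact Measurable.aestronglyMeasurable (by fun_prop)
  · filter_upwards [ae_restrict_mem measurableSet_Ioi] with s hs
    simp only [mem_Ioi] at hs
    rw [Real.norm_eq_abs, abs_of_pos (Real.exp_pos _), Real.exp_le_exp]
    have : 0 ≤ b / s := div_nonneg hb hs.le
    nlinarith

lemma besselK_rep (a b : ℝ) (ha : 0 < a) (hb : 0 < b) :
    ∫ s in Ioi (0:ℝ), Real.exp (-(a * s + b / s)) =
      2 * Real.sqrt (b / a) * besselK 1 (2 * Real.sqrt (a * b)) := by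
  obtain ⟨c, hc, hc2⟩ : ∃ c : ℝ, 0 < c ∧ c ^ 2 = b / a :=
    ⟨Real.sqrt (b / a), Real.sqrt_pos.2 (div_pos hb ha), Real.sq_sqrt (div_pos hb ha).le⟩
  have hcs : Real.sqrt (b / a) = c := by
    rw [← hc2, Real.sqrt_sq hc.le]
  rw [hcs]
  set x : ℝ := 2 * Real.sqrt (a * b) with hxdef
  have hab2 : a * b = (a * c) ^ 2 := by
    rw [mul_pow, hc2]; field_simp
  have hac : a * c = Real.sqrt (a * b) := by
    rw [hab2, Real.sqrt_sq (by positivity)]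
  have hbc : b / c = Real.sqrt (a * b) := by
    have hab3 : a * b = (b / c) ^ 2 := by
      rw [div_pow, hc2]
      field_simp
    rw [hab3, Real.sqrt_sq (by positivity)]
  have hderiv : ∀ t ∈ (univ : Set ℝ),
      HasDerivWithinAt (fun t : ℝ => c * Real.exp t) (c * Real.exp t) univ t :=
    fun t _ => ((Real.hasDerivAt_exp t).const_mul c).hasDerivWithinAt
  have hinj : InjOn (fun t : ℝ => c * Real.exp t) univ := by
    intro u _ v _ h
    simp only at h
    have := mul_left_cancel₀ (ne_of_gt hc) h
    exact Real.exp_injective this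
  set E : ℝ → ℝ := fun s => Real.exp (-(a * s + b / s)) with hE
  have hpt : ∀ t : ℝ, |c * Real.exp t| • E (c * Real.exp t)
      = c * (Real.exp t * Real.exp (-(x * Real.cosh t))) := by
    intro t
    have het : (0:ℝ) < Real.exp t := Real.exp_pos t
    have harg : a * (c * Real.exp t) + b / (c * Real.exp t) = x * Real.cosh t := by
      have h1 : b / (c * Real.exp t) = (b / c) * Real.exp (-t) := by
        rw [Real.exp_neg]
        field_simp
      rw [h1, hbc, Real.cosh_eq, hxdef, ← mul_assoc a c, hac]
      ring
    simp only [smul_eq_mul, hE]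
    rw [abs_of_pos (by positivity), harg]
    ring
  have key := integral_image_eq_integral_abs_deriv_smul MeasurableSet.univ
      hderiv hinj E
  rw [image_cexp c hc, Measure.restrict_univ] at key
  have hiff := integrableOn_image_iff_integrableOn_abs_deriv_smul MeasurableSet.univ
      hderiv hinj E
  rw [image_cexp c hc] at hiff
  have hEint : IntegrableOn E (Ioi 0) := integrableOn_E1 a b ha hb.le
  have hInt : Integrable (fun t : ℝ => Real.exp t * Real.exp (-(x * Real.cosh t))) := by
    have h1 : Integrable (fun t : ℝ => |c * Real.exp t| • E (c * Real.exp t)) :=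
      integrableOn_univ.1 (hiff.1 hEint)
    have h2 := (h1.congr (Filter.Eventually.of_forall hpt)).const_mul c⁻¹
    refine h2.congr (Filter.Eventually.of_forall fun t => ?_)
    field_simp
  set h : ℝ → ℝ := fun t => Real.exp t * Real.exp (-(x * Real.cosh t)) with hh
  have hBint : IntegrableOn (fun t : ℝ => Real.exp (-t) * Real.exp (-(x * Real.cosh t))) (Ioi 0) := by
    refine hInt.integrableOn.mono' (Measurable.aestronglyMeasurable (by fun_prop)) ?_
    filter_upwards [ae_restrict_mem measurableSet_Ioi] with t ht
    simp only [mem_Ioi] at ht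
    rw [Real.norm_eq_abs, abs_of_pos (by positivity)]
    have h3 : Real.exp (-t) ≤ Real.exp t := Real.exp_le_exp.2 (by linarith)
    exact mul_le_mul_of_nonneg_right h3 (Real.exp_pos _).le
  -- split the full-line integral
  have hfull : (∫ t : ℝ, h t) =
      (∫ t in Ioi (0:ℝ), Real.exp (-t) * Real.exp (-(x * Real.cosh t))) +
      ∫ t in Ioi (0:ℝ), h t := by
    rw [← intervalIntegral.integral_Iic_add_Ioi hInt.integrableOn hInt.integrableOn]
    have h4 := integral_comp_neg_Ioi (0:ℝ) h
    rw [neg_zero] at h4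
    have h5 : (∫ t in Ioi (0:ℝ), h (-t)) =
        ∫ t in Ioi (0:ℝ), Real.exp (-t) * Real.exp (-(x * Real.cosh t)) := by
      refine setIntegral_congr_fun measurableSet_Ioi fun t _ => ?_
      simp only [hh]
      rw [Real.cosh_neg]
    rw [← h4, h5]
  have hbes : besselK 1 x = (1/2) * ((∫ t in Ioi (0:ℝ),
      Real.exp (-t) * Real.exp (-(x * Real.cosh t))) + ∫ t in Ioi (0:ℝ), h t) := by
    rw [← integral_add hBint hInt.integrableOn]
    unfold besselK
    rw [← MeasureTheory.integral_const_mul]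
    refine setIntegral_congr_fun measurableSet_Ioi fun t _ => ?_
    simp only [hh, one_mul, Real.cosh_eq, neg_mul]
    ring
  have hmain : (∫ t : ℝ, h t) = 2 * besselK 1 x := by
    rw [hbes, hfull]; ring
  rw [key, integral_congr_ae (Filter.Eventually.of_forall hpt),
    MeasureTheory.integral_const_mul, hmain]
  ring

lemma integrableOn_threehalf (a b : ℝ) (ha : 0 < a) (hb : 0 < b) :
    IntegrableOn (fun s : ℝ => s ^ (-(3:ℝ)/2) * Real.exp (-(a * s + b / s))) (Ioi 0) := by
  have h := integrableOn_rpow_exp a b (3/2) ha hb (by norm_num) (by norm_num)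
  refine h.congr_fun (fun s _ => ?_) measurableSet_Ioi
  norm_num

lemma integrableOn_half (a b : ℝ) (ha : 0 < a) (hb : 0 < b) :
    IntegrableOn (fun s : ℝ => s ^ (-(1:ℝ)/2) * Real.exp (-(a * s + b / s))) (Ioi 0) := by
  have h := integrableOn_rpow_exp a b (1/2) ha hb (by norm_num) (by norm_num)
  refine h.congr_fun (fun s _ => ?_) measurableSet_Ioi
  norm_num

theorem two_slater_integral_transform (R₁ R₂ η₁ η₂ : ℝ)
    (hR₁ : 0 < R₁) (hR₂ : 0 < R₂) (hη₁ : 0 < η₁) (hη₂ : 0 < η₂) :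
    (Real.exp (-R₁ * η₁) / R₁) * (Real.exp (-R₂ * η₂) / R₂) =
      (1 / π) * ∫ ζ in Set.Ioi (0:ℝ),
        Real.sqrt (ζ * η₂ ^ 2 + η₁ ^ 2) *
          besselK 1 (Real.sqrt (R₁ ^ 2 + R₂ ^ 2 / ζ) * Real.sqrt (η₁ ^ 2 + ζ * η₂ ^ 2)) /
            (ζ ^ ((3:ℝ)/2) * Real.sqrt (R₁ ^ 2 + R₂ ^ 2 / ζ)) := by
  set F : ℝ → ℝ → ℝ := fun ζ s =>
    ζ ^ (-(3:ℝ)/2) * Real.exp (-((R₁^2 + R₂^2/ζ) * s + ((η₁^2 + ζ*η₂^2)/4)/s)) with hF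
  -- Step 1: pointwise identification of the integrand
  have step1 : ∀ ζ ∈ Ioi (0:ℝ),
      Real.sqrt (ζ * η₂ ^ 2 + η₁ ^ 2) *
        besselK 1 (Real.sqrt (R₁ ^ 2 + R₂ ^ 2 / ζ) * Real.sqrt (η₁ ^ 2 + ζ * η₂ ^ 2)) /
          (ζ ^ ((3:ℝ)/2) * Real.sqrt (R₁ ^ 2 + R₂ ^ 2 / ζ))
      = ∫ s in Ioi (0:ℝ), F ζ s := by
    intro ζ hζ
    simp only [mem_Ioi] at hζ
    have hζ' : ζ ≠ 0 := ne_of_gt hζ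
    set A : ℝ := R₁^2 + R₂^2/ζ with hA
    set B : ℝ := η₁^2 + ζ*η₂^2 with hB
    have hApos : 0 < A := by rw [hA]; positivity
    have hBpos : 0 < B := by rw [hB]; positivity
    have hrep := besselK_rep A (B/4) hApos (by positivity)
    have hs1 : 2 * Real.sqrt (A * (B/4)) = Real.sqrt A * Real.sqrt B := by
      rw [show A * (B/4) = (Real.sqrt A * Real.sqrt B / 2)^2 by
        rw [div_pow, mul_pow, Real.sq_sqrt hApos.le, Real.sq_sqrt hBpos.le]; ring,
        Real.sqrt_sq (by positivity)]
      ring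
    have hs2 : 2 * Real.sqrt ((B/4) / A) = Real.sqrt B / Real.sqrt A := by
      rw [show (B/4) / A = (Real.sqrt B / Real.sqrt A / 2)^2 by
        rw [div_pow, div_pow, Real.sq_sqrt hApos.le, Real.sq_sqrt hBpos.le]; ring,
        Real.sqrt_sq (by positivity)]
      ring
    have hrep2 : (∫ s in Ioi (0:ℝ), Real.exp (-(A * s + (B/4) / s)))
        = Real.sqrt B / Real.sqrt A * besselK 1 (Real.sqrt A * Real.sqrt B) := by
      rw [hrep, ← hs1, ← hs2]
    have hFs : (∫ s in Ioi (0:ℝ), F ζ s)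
        = ζ ^ (-(3:ℝ)/2) * ∫ s in Ioi (0:ℝ), Real.exp (-(A * s + (B/4) / s)) := by
      rw [← MeasureTheory.integral_const_mul]
    rw [hFs, hrep2]
    have hBcomm : ζ * η₂ ^ 2 + η₁ ^ 2 = B := by rw [hB]; ring
    rw [hBcomm]
    have hrpow : ζ ^ (-(3:ℝ)/2) = (ζ ^ ((3:ℝ)/2))⁻¹ := by
      rw [show (-(3:ℝ)/2) = -((3:ℝ)/2) by norm_num, Real.rpow_neg hζ.le]
    rw [hrpow]
    have h32 : (0:ℝ) < ζ ^ ((3:ℝ)/2) := Real.rpow_pos_of_pos hζ _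
    have hsA : (0:ℝ) < Real.sqrt A := Real.sqrt_pos.2 hApos
    field_simp
  rw [setIntegral_congr_fun measurableSet_Ioi step1]
  -- Step 2: evaluate the double integral
  have hFmeas : Measurable (Function.uncurry F) := by fun_prop
  have hFint : ∀ ζ ∈ Ioi (0:ℝ), IntegrableOn (fun s => F ζ s) (Ioi 0) := by
    intro ζ hζ
    simp only [mem_Ioi] at hζ
    have hApos : (0:ℝ) < R₁^2 + R₂^2/ζ := by positivity
    have hBpos : (0:ℝ) ≤ (η₁^2 + ζ*η₂^2)/4 := by positivity
    exact (integrableOn_E1 _ _ hApos hBpos).const_mul _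
  have hFnn : ∀ ζ ∈ Ioi (0:ℝ), ∀ s : ℝ, 0 ≤ F ζ s := by
    intro ζ hζ s
    simp only [mem_Ioi] at hζ
    exact mul_nonneg (Real.rpow_nonneg hζ.le _) (Real.exp_pos _).le
  have hconv1 : ∀ ζ ∈ Ioi (0:ℝ), ENNReal.ofReal (∫ s in Ioi (0:ℝ), F ζ s)
      = ∫⁻ s in Ioi (0:ℝ), ENNReal.ofReal (F ζ s) := fun ζ hζ =>
    ofReal_integral_eq_lintegral_ofReal (hFint ζ hζ)
      (Filter.Eventually.of_forall (hFnn ζ hζ))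
  have hswap : (∫⁻ ζ in Ioi (0:ℝ), ∫⁻ s in Ioi (0:ℝ), ENNReal.ofReal (F ζ s))
      = ∫⁻ s in Ioi (0:ℝ), ∫⁻ ζ in Ioi (0:ℝ), ENNReal.ofReal (F ζ s) :=
    lintegral_lintegral_swap (hFmeas.ennreal_ofReal).aemeasurable
  set K : ℝ := Real.sqrt π / R₂ * Real.exp (-(R₂ * η₂)) with hK
  have hKpos : 0 < K := by
    rw [hK]; positivity
  have hζeval : ∀ s ∈ Ioi (0:ℝ), (∫⁻ ζ in Ioi (0:ℝ), ENNReal.ofReal (F ζ s))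
      = ENNReal.ofReal (K * (s ^ (-(1:ℝ)/2) * Real.exp (-(R₁^2 * s + (η₁^2/4)/s)))) := by
    intro s hs
    simp only [mem_Ioi] at hs
    have hs' : s ≠ 0 := ne_of_gt hs
    have ha'pos : (0:ℝ) < η₂^2/(4*s) := by positivity
    have hb'pos : (0:ℝ) < s * R₂^2 := by positivity
    have hsplitF : ∀ ζ ∈ Ioi (0:ℝ), F ζ s =
        Real.exp (-(R₁^2*s + (η₁^2/4)/s)) *
          (ζ ^ (-(3:ℝ)/2) * Real.exp (-(η₂^2/(4*s) * ζ + s * R₂^2 / ζ))) := by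
      intro ζ hζ
      simp only [mem_Ioi] at hζ
      have hζ' : ζ ≠ 0 := ne_of_gt hζ
      simp only [hF]
      have harg : -((R₁^2 + R₂^2/ζ) * s + ((η₁^2 + ζ*η₂^2)/4)/s)
          = -(R₁^2*s + (η₁^2/4)/s) + -(η₂^2/(4*s) * ζ + s * R₂^2 / ζ) := by
        field_simp
        ring
      rw [harg, Real.exp_add]
      ring
    have hintg : IntegrableOn (fun ζ => F ζ s) (Ioi 0) := by
      refine (IntegrableOn.congr_fun ?_ (fun ζ hζ => (hsplitF ζ hζ).symm) measurableSet_Ioi)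
      exact (integrableOn_threehalf _ _ ha'pos hb'pos).const_mul _
    have hnnζ : 0 ≤ᵐ[volume.restrict (Ioi (0:ℝ))] fun ζ => F ζ s := by
      filter_upwards [ae_restrict_mem measurableSet_Ioi] with ζ hζ
      exact hFnn ζ hζ s
    rw [← ofReal_integral_eq_lintegral_ofReal hintg hnnζ]
    congr 1
    rw [setIntegral_congr_fun measurableSet_Ioi hsplitF, MeasureTheory.integral_const_mul,
      int_threehalf _ _ ha'pos hb'pos]
    have hv1 : Real.sqrt (π/(s*R₂^2)) = Real.sqrt π / (Real.sqrt s * R₂) := by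
      rw [Real.sqrt_div pi_pos.le, Real.sqrt_mul hs.le, Real.sqrt_sq hR₂.le]
    have hv2 : 2 * Real.sqrt (η₂^2/(4*s)*(s*R₂^2)) = R₂ * η₂ := by
      rw [show η₂^2/(4*s)*(s*R₂^2) = (R₂ * η₂/2)^2 by field_simp; ring,
        Real.sqrt_sq (by positivity)]
      ring
    have hv3 : s ^ (-(1:ℝ)/2) = (Real.sqrt s)⁻¹ := by
      rw [show (-(1:ℝ)/2) = -(1/2) by norm_num, Real.rpow_neg hs.le,
        ← Real.sqrt_eq_rpow]
    rw [hv1, hv2, hv3, hK]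
    have hss : Real.sqrt s ≠ 0 := ne_of_gt (Real.sqrt_pos.2 hs)
    field_simp
  have hnn : 0 ≤ᵐ[volume.restrict (Ioi (0:ℝ))] fun ζ => ∫ s in Ioi (0:ℝ), F ζ s := by
    filter_upwards [ae_restrict_mem measurableSet_Ioi] with ζ hζ
    exact integral_nonneg (fun s => hFnn ζ hζ s)
  have hmeasV : AEStronglyMeasurable (fun ζ => ∫ s in Ioi (0:ℝ), F ζ s)
      (volume.restrict (Ioi (0:ℝ))) :=
    (hFmeas.stronglyMeasurable.integral_prod_right).aestronglyMeasurable
  rw [integral_eq_lintegral_of_nonneg_ae hnn hmeasV]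
  have hlin1 : (∫⁻ ζ in Ioi (0:ℝ), ENNReal.ofReal (∫ s in Ioi (0:ℝ), F ζ s))
      = ∫⁻ ζ in Ioi (0:ℝ), ∫⁻ s in Ioi (0:ℝ), ENNReal.ofReal (F ζ s) :=
    setLIntegral_congr_fun measurableSet_Ioi hconv1
  have hlin2 : (∫⁻ s in Ioi (0:ℝ), ∫⁻ ζ in Ioi (0:ℝ), ENNReal.ofReal (F ζ s))
      = ENNReal.ofReal (K * (Real.sqrt π / R₁ * Real.exp (-(R₁ * η₁)))) := by
    rw [setLIntegral_congr_fun measurableSet_Ioi hζeval]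
    have hintK : IntegrableOn (fun s : ℝ => K * (s ^ (-(1:ℝ)/2) *
        Real.exp (-(R₁^2 * s + (η₁^2/4)/s)))) (Ioi 0) :=
      (integrableOn_half (R₁^2) (η₁^2/4) (by positivity) (by positivity)).const_mul K
    have hnnK : 0 ≤ᵐ[volume.restrict (Ioi (0:ℝ))] fun s : ℝ => K * (s ^ (-(1:ℝ)/2) *
        Real.exp (-(R₁^2 * s + (η₁^2/4)/s))) := by
      filter_upwards [ae_restrict_mem measurableSet_Ioi] with s hs
      simp only [mem_Ioi] at hs
      have h1 : (0:ℝ) ≤ s ^ (-(1:ℝ)/2) := Real.rpow_nonneg hs.le _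
      have h2 := (Real.exp_pos (-(R₁^2 * s + (η₁^2/4)/s))).le
      positivity
    rw [← ofReal_integral_eq_lintegral_ofReal hintK hnnK]
    congr 1
    rw [MeasureTheory.integral_const_mul, int_half _ _ (by positivity) (by positivity)]
    have hw1 : Real.sqrt (π/R₁^2) = Real.sqrt π / R₁ := by
      rw [Real.sqrt_div pi_pos.le, Real.sqrt_sq hR₁.le]
    have hw2 : 2 * Real.sqrt (R₁^2*(η₁^2/4)) = R₁ * η₁ := by
      rw [show R₁^2*(η₁^2/4) = (R₁*η₁/2)^2 by ring, Real.sqrt_sq (by positivity)]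
      ring
    rw [hw1, hw2]
  rw [hlin1, hswap, hlin2, ENNReal.toReal_ofReal (by positivity)]
  rw [hK]
  have hpp : Real.sqrt π * Real.sqrt π = π := Real.mul_self_sqrt pi_pos.le
  rw [neg_mul, neg_mul]
  field_simp
  linear_combination (-1 : ℝ) * hpp
end

section
/- For x₂ > 0 and positive reals η₁ ≠ η₁₂: ∫₀^∞ 2π exp(-x₂ √(ζη₁₂² + η₁²)/√(ζ+1)) / ((ζ+1)^{3/2} √(ζη₁₂² + η₁²)) dζ = 4π (e^{-η₁₂ x₂} - e^{-η₁ x₂}) / (x₂ (η₁² - η₁₂²)). -/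
open MeasureTheory Real

theorem zeta_integral_two_slater (x₂ η₁ η₁₂ : ℝ) (hx₂ : 0 < x₂)
    (h₁ : 0 < η₁) (h₁₂ : 0 < η₁₂) (hne : η₁ ≠ η₁₂) :
    ∫ ζ in Set.Ioi (0:ℝ),
        2 * π * Real.exp (-x₂ * Real.sqrt (ζ * η₁₂ ^ 2 + η₁ ^ 2) / Real.sqrt (ζ + 1)) /
          ((ζ + 1) ^ ((3:ℝ)/2) * Real.sqrt (ζ * η₁₂ ^ 2 + η₁ ^ 2)) =
      4 * π * (Real.exp (-η₁₂ * x₂) - Real.exp (-η₁ * x₂)) / (x₂ * (η₁ ^ 2 - η₁₂ ^ 2)) := by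
  have hsq : η₁ ^ 2 - η₁₂ ^ 2 ≠ 0 := by
    intro h
    apply hne
    nlinarith
  set c : ℝ := -4 * π / (x₂ * (η₁₂ ^ 2 - η₁ ^ 2)) with hc
  set F : ℝ → ℝ := fun t => c * Real.exp (-x₂ * Real.sqrt ((t * η₁₂ ^ 2 + η₁ ^ 2) / (t + 1)))
    with hF
  set F' : ℝ → ℝ := fun ζ =>
      2 * π * Real.exp (-x₂ * Real.sqrt (ζ * η₁₂ ^ 2 + η₁ ^ 2) / Real.sqrt (ζ + 1)) /
        ((ζ + 1) ^ ((3:ℝ)/2) * Real.sqrt (ζ * η₁₂ ^ 2 + η₁ ^ 2)) with hF'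
  have hderiv : ∀ ζ ∈ Set.Ici (0:ℝ), HasDerivAt F (F' ζ) ζ := by
    intro ζ hζ
    have hζ0 : (0:ℝ) ≤ ζ := hζ
    have hD : (0:ℝ) < ζ + 1 := by linarith
    have hN : (0:ℝ) < ζ * η₁₂ ^ 2 + η₁ ^ 2 := by positivity
    have hh : (0:ℝ) < (ζ * η₁₂ ^ 2 + η₁ ^ 2) / (ζ + 1) := div_pos hN hD
    have d1 : HasDerivAt (fun t : ℝ => (t * η₁₂ ^ 2 + η₁ ^ 2) / (t + 1))
        ((η₁₂ ^ 2 - η₁ ^ 2) / (ζ + 1) ^ 2) ζ := by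
      have := (((hasDerivAt_id ζ).mul_const (η₁₂ ^ 2)).add_const (η₁ ^ 2)).div
        ((hasDerivAt_id ζ).add_const 1) (ne_of_gt hD)
      refine this.congr_deriv ?_
      simp only [id]
      field_simp
      ring
    have d2 : HasDerivAt (fun t : ℝ => Real.sqrt ((t * η₁₂ ^ 2 + η₁ ^ 2) / (t + 1)))
        (1 / (2 * Real.sqrt ((ζ * η₁₂ ^ 2 + η₁ ^ 2) / (ζ + 1))) *
          ((η₁₂ ^ 2 - η₁ ^ 2) / (ζ + 1) ^ 2)) ζ :=
      (Real.hasDerivAt_sqrt (ne_of_gt hh)).comp ζ d1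
    have d3 := (((d2.const_mul (-x₂)).exp).const_mul c)
    refine d3.congr_deriv ?_
    have hs : Real.sqrt ((ζ * η₁₂ ^ 2 + η₁ ^ 2) / (ζ + 1)) =
        Real.sqrt (ζ * η₁₂ ^ 2 + η₁ ^ 2) / Real.sqrt (ζ + 1) :=
      Real.sqrt_div hN.le _
    have hr : (ζ + 1) ^ ((3:ℝ)/2) = (ζ + 1) * Real.sqrt (ζ + 1) := by
      rw [show (3:ℝ)/2 = 1 + 1/2 by norm_num, Real.rpow_add hD, Real.rpow_one,
        Real.sqrt_eq_rpow]
    have hsN : Real.sqrt (ζ * η₁₂ ^ 2 + η₁ ^ 2) ≠ 0 := ne_of_gt (Real.sqrt_pos.mpr hN)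
    have hsD : (0:ℝ) < Real.sqrt (ζ + 1) := Real.sqrt_pos.mpr hD
    have hsq2 : ζ + 1 = Real.sqrt (ζ + 1) ^ 2 := (Real.sq_sqrt hD.le).symm
    simp only [hF', hs, hr, hc, mul_div_assoc]
    set E := Real.exp (-x₂ * (Real.sqrt (ζ * η₁₂ ^ 2 + η₁ ^ 2) / Real.sqrt (ζ + 1)))
    set n := Real.sqrt (ζ * η₁₂ ^ 2 + η₁ ^ 2)
    set s := Real.sqrt (ζ + 1)
    rw [hsq2]
    have hηne : η₁₂ ^ 2 - η₁ ^ 2 ≠ 0 := fun h => hsq (by linarith)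
    field_simp
    ring
  have hpos : ∀ ζ ∈ Set.Ioi (0:ℝ), 0 ≤ F' ζ := by
    intro ζ hζ
    have hζ0 : (0:ℝ) < ζ := hζ
    have hD : (0:ℝ) < ζ + 1 := by linarith
    have hN : (0:ℝ) < ζ * η₁₂ ^ 2 + η₁ ^ 2 := by positivity
    have := Real.pi_pos
    have h1 : (0:ℝ) < (ζ + 1) ^ ((3:ℝ)/2) := Real.rpow_pos_of_pos hD _
    have h2 : (0:ℝ) < Real.sqrt (ζ * η₁₂ ^ 2 + η₁ ^ 2) := Real.sqrt_pos.mpr hN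
    simp only [hF']
    positivity
  have htend : Filter.Tendsto F Filter.atTop (nhds (c * Real.exp (-x₂ * η₁₂))) := by
    have h1 : Filter.Tendsto (fun ζ : ℝ => (ζ * η₁₂ ^ 2 + η₁ ^ 2) / (ζ + 1))
        Filter.atTop (nhds (η₁₂ ^ 2)) := by
      have h2 : Filter.Tendsto (fun ζ : ℝ => η₁₂ ^ 2 + (η₁ ^ 2 - η₁₂ ^ 2) / (ζ + 1))
          Filter.atTop (nhds (η₁₂ ^ 2 + 0)) := by
        apply Filter.Tendsto.add tendsto_const_nhds
        apply Filter.Tendsto.div_atTop tendsto_const_nhds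
        exact Filter.tendsto_atTop_add_const_right _ 1 Filter.tendsto_id
      rw [add_zero] at h2
      apply h2.congr'
      filter_upwards [Filter.eventually_gt_atTop (0:ℝ)] with ζ hζ
      have hD : (ζ:ℝ) + 1 ≠ 0 := by positivity
      field_simp
      ring
    have h3 : Filter.Tendsto (fun ζ : ℝ => Real.sqrt ((ζ * η₁₂ ^ 2 + η₁ ^ 2) / (ζ + 1)))
        Filter.atTop (nhds η₁₂) := by
      have := (Real.continuous_sqrt.tendsto (η₁₂ ^ 2)).comp h1
      rwa [Real.sqrt_sq h₁₂.le] at this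
    exact ((Real.continuous_exp.tendsto _).comp ((h3.const_mul (-x₂)))).const_mul c
  have key := integral_Ioi_of_hasDerivAt_of_nonneg' hderiv hpos htend
  rw [key, hF]
  have hF0 : Real.sqrt ((0 * η₁₂ ^ 2 + η₁ ^ 2) / (0 + 1)) = η₁ := by
    rw [zero_mul, zero_add, zero_add, div_one, Real.sqrt_sq h₁.le]
  simp only [hF0, hc]
  have hηne : η₁₂ ^ 2 - η₁ ^ 2 ≠ 0 := fun h => hsq (by linarith)
  rw [show -x₂ * η₁₂ = -η₁₂ * x₂ by ring, show -x₂ * η₁ = -η₁ * x₂ by ring]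
  field_simp
  ring
end

section
/- For x₂ > 0 and positive reals η₁ < η₁₂: ∫₀^1 τ^{-1/2} ∫₀^∞ ρ^{-3/2} exp(-x₂² τ ρ - (η₁₂² τ + η₁² (1-τ))/(4τρ)) dρ dτ = 2√π ∫₀^1 e^{-x₂ √(τ(η₁₂²-η₁²)+η₁²)} / √(τ(η₁₂²-η₁²)+η₁²) dτ = (4√π/(x₂(η₁₂²-η₁²))) (e^{-η₁ x₂} - e^{-η₁₂ x₂}). -/
open MeasureTheory Real Set

lemma bound_aux {b x p : ℝ} (hb : 0 < b) (hx : 0 < x) (hp1 : -2 ≤ p) (hp2 : p ≤ 0) :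
    x ^ p * Real.exp (-(b/x)) ≤ 1 + 4/b^2 := by
  have hxi : 0 < x⁻¹ := inv_pos.mpr hx
  have hrw : x ^ p = x⁻¹ ^ (-p) := by
    rw [Real.inv_rpow hx.le, ← Real.rpow_neg hx.le, neg_neg]
  rw [hrw]
  have hbx : b / x = b * x⁻¹ := div_eq_mul_inv b x
  rw [hbx]
  rcases le_or_gt x⁻¹ 1 with h1 | h1
  · have h2 : x⁻¹ ^ (-p) ≤ 1 := Real.rpow_le_one hxi.le h1 (by linarith)
    have h3 : Real.exp (-(b * x⁻¹)) ≤ 1 := Real.exp_le_one_iff.mpr (by nlinarith)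
    have h4 : 0 ≤ x⁻¹ ^ (-p) := Real.rpow_nonneg hxi.le (-p)
    have h5 : 0 ≤ Real.exp (-(b*x⁻¹)) := Real.exp_nonneg _
    have h6 : (0:ℝ) ≤ 4 / b ^ 2 := by positivity
    nlinarith
  · have h2 : x⁻¹ ^ (-p) ≤ x⁻¹ ^ (2:ℝ) :=
      Real.rpow_le_rpow_of_exponent_le h1.le (by linarith)
    have h2' : x⁻¹ ^ (2:ℝ) = x⁻¹ ^ (2:ℕ) := by
      rw [← Real.rpow_natCast x⁻¹ 2]; norm_num
    have hexp : (b * x⁻¹ / 2 + 1)^2 ≤ Real.exp (b * x⁻¹) := by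
      have h4 := Real.add_one_le_exp (b * x⁻¹ / 2)
      have h5 : Real.exp (b * x⁻¹) = Real.exp (b * x⁻¹ / 2) ^ 2 := by
        rw [← Real.exp_nat_mul]; norm_num; ring
      have h6 : 0 ≤ b * x⁻¹ / 2 + 1 := by positivity
      rw [h5]; nlinarith
    have key : x⁻¹ ^ (2:ℕ) * Real.exp (-(b * x⁻¹)) ≤ 4 / b^2 := by
      rw [Real.exp_neg, ← div_eq_mul_inv]
      rw [div_le_div_iff₀ (Real.exp_pos _) (by positivity)]
      nlinarith [sq_nonneg (b * x⁻¹), Real.exp_pos (b * x⁻¹)]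
    calc x⁻¹ ^ (-p) * Real.exp (-(b * x⁻¹)) ≤ x⁻¹ ^ (2:ℕ) * Real.exp (-(b * x⁻¹)) := by
          rw [← h2']; exact mul_le_mul_of_nonneg_right h2 (Real.exp_nonneg _)
      _ ≤ 4 / b^2 := key
      _ ≤ 1 + 4/b^2 := by linarith

lemma integ_aux {a b p : ℝ} (ha : 0 < a) (hb : 0 < b) (hp1 : -2 ≤ p) (hp2 : p ≤ 0) :
    IntegrableOn (fun x => x ^ p * Real.exp (-(a*x) - b/x)) (Ioi (0:ℝ)) := by
  have hcont : ContinuousOn (fun x : ℝ => x ^ p * Real.exp (-(a*x) - b/x)) (Ioi 0) := by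
    apply ContinuousOn.mul
    · exact fun x hx => (Real.continuousAt_rpow_const x p (Or.inl (ne_of_gt hx))).continuousWithinAt
    · exact (Real.continuous_exp.comp_continuousOn
        (((continuous_const.mul continuous_id).neg.continuousOn).sub
          (continuousOn_const.div continuousOn_id (fun x hx => ne_of_gt hx))))
  refine Integrable.mono' ((exp_neg_integrableOn_Ioi 0 ha).const_mul (1 + 4/b^2))
    (hcont.aestronglyMeasurable measurableSet_Ioi) ?_
  filter_upwards [ae_restrict_mem measurableSet_Ioi] with x hx
  have hx : (0:ℝ) < x := hx
  have h1 : 0 ≤ x ^ p * Real.exp (-(a*x) - b/x) := by positivity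
  rw [Real.norm_of_nonneg h1]
  have : Real.exp (-(a*x) - b/x) = Real.exp (-(b/x)) * Real.exp (-(a*x)) := by
    rw [← Real.exp_add]; ring_nf
  rw [this, ← mul_assoc]
  have : -a * x = -(a*x) := by ring
  rw [this]
  exact mul_le_mul_of_nonneg_right (bound_aux hb hx hp1 hp2) (Real.exp_nonneg _)
lemma refl_aux {a b : ℝ} (ha : 0 < a) (hb : 0 < b) :
    ∫ x in Ioi (0:ℝ), x ^ (-(3:ℝ)/2) * Real.exp (-(a*x) - b/x)
      = Real.sqrt (a/b) * ∫ x in Ioi (0:ℝ), x ^ (-(1:ℝ)/2) * Real.exp (-(a*x) - b/x) := by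
  have hba : 0 < b / a := div_pos hb ha
  set f : ℝ → ℝ := fun x => (b/a) * x⁻¹ with hf
  have himg : f '' Ioi 0 = Ioi (0:ℝ) := by
    ext y; constructor
    · rintro ⟨x, hx, rfl⟩
      exact mul_pos hba (inv_pos.mpr hx)
    · intro hy
      refine ⟨(b/a) * y⁻¹, mul_pos hba (inv_pos.mpr hy), ?_⟩
      simp only [hf]
      field_simp
  have hderiv : ∀ x ∈ Ioi (0:ℝ), HasDerivWithinAt f ((b/a) * (-(x^2)⁻¹)) (Ioi 0) x :=
    fun x hx => ((hasDerivAt_inv (ne_of_gt hx)).const_mul (b/a)).hasDerivWithinAt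
  have hinj : InjOn f (Ioi 0) := by
    intro x hx y hy hxy
    simp only [hf] at hxy
    have := mul_left_cancel₀ (ne_of_gt hba) hxy
    exact inv_injective this
  have := integral_image_eq_integral_abs_deriv_smul measurableSet_Ioi hderiv hinj
    (fun x => x ^ (-(3:ℝ)/2) * Real.exp (-(a*x) - b/x))
  rw [himg] at this
  rw [this, ← MeasureTheory.integral_const_mul]
  refine setIntegral_congr_fun measurableSet_Ioi fun x hx => ?_
  have hx : (0:ℝ) < x := hx
  simp only [smul_eq_mul, hf]
  have habs : |(b/a) * (-(x^2)⁻¹)| = (b/a) * (x^2)⁻¹ := by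
    rw [abs_mul, abs_neg, abs_inv, abs_of_pos hba, abs_of_pos (by positivity : (0:ℝ) < x^2)]
  rw [habs]
  have harg : -(a*((b/a)*x⁻¹)) - b/((b/a)*x⁻¹) = -(a*x) - b/x := by
    field_simp; ring
  rw [harg]
  have h1 : ((b/a)*x⁻¹) ^ (-(3:ℝ)/2) = (b/a)^(-(3:ℝ)/2) * x ^ ((3:ℝ)/2) := by
    rw [Real.mul_rpow hba.le (by positivity), Real.inv_rpow hx.le, ← Real.rpow_neg hx.le]
    norm_num
  rw [h1]
  have h2 : (b/a) * (b/a)^(-(3:ℝ)/2) = (b/a)^(-(1:ℝ)/2) := by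
    rw [show (b/a) * (b/a)^(-(3:ℝ)/2) = (b/a)^(1:ℝ) * (b/a)^(-(3:ℝ)/2) by rw [Real.rpow_one],
      ← Real.rpow_add hba]
    norm_num
  have h3 : x^((3:ℝ)/2) * (x^2)⁻¹ = x^(-(1:ℝ)/2) := by
    rw [show (x^2)⁻¹ = x ^ (-(2:ℝ)) by rw [Real.rpow_neg hx.le, Real.rpow_two],
      ← Real.rpow_add hx]
    norm_num
  have h4 : (b/a)^(-(1:ℝ)/2) = Real.sqrt (a/b) := by
    rw [Real.sqrt_eq_rpow, show (a/b) = (b/a)⁻¹ by rw [inv_div],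
      Real.inv_rpow hba.le, ← Real.rpow_neg hba.le]
    norm_num
  calc (b/a) * (x^2)⁻¹ * ((b/a)^(-(3:ℝ)/2) * x ^ ((3:ℝ)/2) * Real.exp (-(a*x) - b/x))
      = ((b/a) * (b/a)^(-(3:ℝ)/2)) * (x^((3:ℝ)/2) * (x^2)⁻¹) * Real.exp (-(a*x) - b/x) := by ring
    _ = Real.sqrt (a/b) * (x ^ (-(1:ℝ)/2) * Real.exp (-(a*x) - b/x)) := by
        rw [h2, h3, h4]; ring

lemma glasser_aux {a b : ℝ} (ha : 0 < a) (hb : 0 < b) :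
    ∫ x in Ioi (0:ℝ),
        (Real.sqrt a / (2*Real.sqrt x) + Real.sqrt b / (2*x*Real.sqrt x)) * Real.exp (-(a*x) - b/x)
      = Real.sqrt π * Real.exp (-2 * Real.sqrt (a*b)) := by
  have hsa : 0 < Real.sqrt a := Real.sqrt_pos.mpr ha
  have hsb : 0 < Real.sqrt b := Real.sqrt_pos.mpr hb
  set f : ℝ → ℝ := fun x => Real.sqrt a * Real.sqrt x - Real.sqrt b * (Real.sqrt x)⁻¹ with hf
  set D : ℝ → ℝ := fun x => Real.sqrt a / (2*Real.sqrt x) + Real.sqrt b / (2*x*Real.sqrt x) with hD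
  have hDpos : ∀ x ∈ Ioi (0:ℝ), 0 < D x := by
    intro x hx
    have hsx : 0 < Real.sqrt x := Real.sqrt_pos.mpr hx
    have hx' : (0:ℝ) < x := hx
    positivity
  have hderiv : ∀ x ∈ Ioi (0:ℝ), HasDerivWithinAt f (D x) (Ioi 0) x := by
    intro x hx
    have hx' : (0:ℝ) < x := hx
    have hsx : 0 < Real.sqrt x := Real.sqrt_pos.mpr hx'
    have h1 : HasDerivAt Real.sqrt (1/(2*Real.sqrt x)) x := Real.hasDerivAt_sqrt (ne_of_gt hx')
    have h2 : HasDerivAt (fun y => Real.sqrt a * Real.sqrt y) (Real.sqrt a * (1/(2*Real.sqrt x))) x :=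
      h1.const_mul _
    have h3 : HasDerivAt (fun y => (Real.sqrt y)⁻¹) (-(1/(2*Real.sqrt x)) / (Real.sqrt x)^2) x :=
      h1.inv (ne_of_gt hsx)
    have h4 : HasDerivAt (fun y => Real.sqrt b * (Real.sqrt y)⁻¹)
        (Real.sqrt b * (-(1/(2*Real.sqrt x)) / (Real.sqrt x)^2)) x := h3.const_mul _
    have h5 := h2.sub h4
    have heq : Real.sqrt a * (1/(2*Real.sqrt x)) - Real.sqrt b * (-(1/(2*Real.sqrt x)) / (Real.sqrt x)^2)
        = D x := by
      have hxx : (Real.sqrt x)^2 = x := Real.sq_sqrt hx'.le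
      rw [hD]; field_simp; nlinarith [hxx]
    rw [← heq]
    exact h5.hasDerivWithinAt
  have hinj : InjOn f (Ioi 0) := by
    intro x hx y hy hxy
    rcases lt_trichotomy x y with h | h | h
    · exfalso
      have hsx : 0 < Real.sqrt x := Real.sqrt_pos.mpr hx
      have hsy : 0 < Real.sqrt y := Real.sqrt_pos.mpr hy
      have h1 : Real.sqrt x < Real.sqrt y := Real.sqrt_lt_sqrt (le_of_lt hx) h
      have h2 : (Real.sqrt y)⁻¹ < (Real.sqrt x)⁻¹ := by
        exact inv_strictAnti₀ hsx h1
      have : f x < f y := by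
        simp only [hf]
        nlinarith
      simp only [hxy] at this; exact lt_irrefl _ this
    · exact h
    · exfalso
      have hsx : 0 < Real.sqrt x := Real.sqrt_pos.mpr hx
      have hsy : 0 < Real.sqrt y := Real.sqrt_pos.mpr hy
      have h1 : Real.sqrt y < Real.sqrt x := Real.sqrt_lt_sqrt (le_of_lt hy) h
      have h2 : (Real.sqrt x)⁻¹ < (Real.sqrt y)⁻¹ := inv_strictAnti₀ hsy h1
      have : f y < f x := by simp only [hf]; nlinarith
      simp only [hxy] at this; exact lt_irrefl _ this
  have himg : f '' Ioi 0 = univ := by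
    apply eq_univ_of_forall
    intro u
    set s := Real.sqrt (u^2 + 4*Real.sqrt a*Real.sqrt b) with hs
    have hab4 : 0 < 4*Real.sqrt a*Real.sqrt b := by positivity
    have hs2 : s^2 = u^2 + 4*Real.sqrt a*Real.sqrt b := Real.sq_sqrt (by nlinarith [sq_nonneg u])
    have hsnn : 0 ≤ s := Real.sqrt_nonneg _
    have hts : 0 < u + s := by nlinarith
    set t : ℝ := (u + s) / (2 * Real.sqrt a) with ht
    have htpos : 0 < t := div_pos hts (by positivity)
    refine ⟨t^2, mem_Ioi.mpr (by positivity), ?_⟩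
    simp only [hf]
    rw [Real.sqrt_sq htpos.le]
    have hta : Real.sqrt a * t^2 - Real.sqrt b = u * t := by
      rw [ht]; field_simp; nlinarith
    field_simp
    nlinarith [hta]
  have him := integral_image_eq_integral_abs_deriv_smul measurableSet_Ioi hderiv hinj
    (fun u => Real.exp (-(u^2) - 2*Real.sqrt (a*b)))
  rw [himg, Measure.restrict_univ] at him
  have hlhs : (∫ u : ℝ, Real.exp (-(u^2) - 2*Real.sqrt (a*b)))
      = Real.sqrt π * Real.exp (-2 * Real.sqrt (a*b)) := by
    have : ∀ u : ℝ, Real.exp (-(u^2) - 2*Real.sqrt (a*b))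
        = Real.exp (-(1:ℝ)*u^2) * Real.exp (-2*Real.sqrt (a*b)) := by
      intro u; rw [← Real.exp_add]; ring_nf
    simp_rw [this]
    rw [integral_mul_const, integral_gaussian]
    norm_num
  rw [hlhs] at him
  rw [him]
  refine setIntegral_congr_fun measurableSet_Ioi fun x hx => ?_
  have hx' : (0:ℝ) < x := hx
  have hsx : 0 < Real.sqrt x := Real.sqrt_pos.mpr hx'
  have hfx2 : (f x)^2 = a*x + b/x - 2*Real.sqrt (a*b) := by
    simp only [hf]
    have h1 : (Real.sqrt a)^2 = a := Real.sq_sqrt ha.le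
    have h2 : (Real.sqrt b)^2 = b := Real.sq_sqrt hb.le
    have h3 : (Real.sqrt x)^2 = x := Real.sq_sqrt hx'.le
    have h4 : Real.sqrt a * Real.sqrt b = Real.sqrt (a*b) := (Real.sqrt_mul ha.le b).symm
    field_simp
    linear_combination (x-1)*(Real.sqrt x)^4*h1 + (x-1)*h2 + (-2*(Real.sqrt x)^2*x)*h4
      + (2*Real.sqrt a*Real.sqrt b - b + a*(x*(Real.sqrt x)^2 - (Real.sqrt x)^2 - x))*h3
      + (Real.sqrt x)^4*h1 + h2 + (-2*Real.sqrt a*Real.sqrt b + a*((Real.sqrt x)^2 + x))*h3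
  have harg : -(f x)^2 - 2*Real.sqrt (a*b) = -(a*x) - b/x := by rw [hfx2]; ring
  simp only [smul_eq_mul]
  rw [abs_of_pos (hDpos x hx), harg]

lemma key_integral {a b : ℝ} (ha : 0 < a) (hb : 0 < b) :
    ∫ x in Ioi (0:ℝ), x ^ (-(3:ℝ)/2) * Real.exp (-(a*x) - b/x)
      = Real.sqrt π / Real.sqrt b * Real.exp (-2 * Real.sqrt (a*b)) := by
  have hsa : 0 < Real.sqrt a := Real.sqrt_pos.mpr ha
  have hsb : 0 < Real.sqrt b := Real.sqrt_pos.mpr hb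
  set I := ∫ x in Ioi (0:ℝ), x ^ (-(3:ℝ)/2) * Real.exp (-(a*x) - b/x) with hI
  set J := ∫ x in Ioi (0:ℝ), x ^ (-(1:ℝ)/2) * Real.exp (-(a*x) - b/x) with hJ
  have hrefl : I = Real.sqrt (a/b) * J := refl_aux ha hb
  have hglasser := glasser_aux ha hb
  have hi1 : IntegrableOn (fun x => (Real.sqrt a/2) * (x ^ (-(1:ℝ)/2) * Real.exp (-(a*x) - b/x)))
      (Ioi (0:ℝ)) := (integ_aux ha hb (by norm_num) (by norm_num)).const_mul _
  have hi2 : IntegrableOn (fun x => (Real.sqrt b/2) * (x ^ (-(3:ℝ)/2) * Real.exp (-(a*x) - b/x)))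
      (Ioi (0:ℝ)) := (integ_aux ha hb (by norm_num) (by norm_num)).const_mul _
  have hcongr : ∫ x in Ioi (0:ℝ),
        (Real.sqrt a / (2*Real.sqrt x) + Real.sqrt b / (2*x*Real.sqrt x)) * Real.exp (-(a*x) - b/x)
      = ∫ x in Ioi (0:ℝ),
        ((Real.sqrt a/2) * (x ^ (-(1:ℝ)/2) * Real.exp (-(a*x) - b/x))
          + (Real.sqrt b/2) * (x ^ (-(3:ℝ)/2) * Real.exp (-(a*x) - b/x))) := by
    refine setIntegral_congr_fun measurableSet_Ioi fun x hx => ?_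
    have hx' : (0:ℝ) < x := hx
    have hsx : 0 < Real.sqrt x := Real.sqrt_pos.mpr hx'
    have h1 : x ^ (-(1:ℝ)/2) = (Real.sqrt x)⁻¹ := by
      rw [show -(1:ℝ)/2 = -(1/2) by norm_num, Real.rpow_neg hx'.le, ← Real.sqrt_eq_rpow]
    have h3 : x ^ (-(3:ℝ)/2) = (x * Real.sqrt x)⁻¹ := by
      rw [show -(3:ℝ)/2 = -(3/2) by norm_num, Real.rpow_neg hx'.le]
      congr 1
      rw [show (3:ℝ)/2 = 1 + 1/2 by norm_num, Real.rpow_add hx', Real.rpow_one,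
        ← Real.sqrt_eq_rpow]
    rw [h1, h3]
    field_simp
  rw [hcongr, integral_add hi1 hi2, integral_const_mul, integral_const_mul, ← hI, ← hJ] at hglasser
  have hJI : Real.sqrt a * J = Real.sqrt b * I := by
    rw [hrefl, Real.sqrt_div ha.le]
    field_simp
  have hbI : Real.sqrt b * I = Real.sqrt π * Real.exp (-2 * Real.sqrt (a*b)) := by
    nlinarith [hJI, hglasser]
  rw [div_mul_eq_mul_div, eq_div_iff (ne_of_gt hsb)]
  nlinarith [hbI]

theorem tau_rho_integral (x₂ η₁ η₁₂ : ℝ) (hx₂ : 0 < x₂) (h₁ : 0 < η₁) (h₁₂ : η₁ < η₁₂) :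
    (∫ τ in Set.Ioo (0:ℝ) 1, τ ^ (-(1:ℝ)/2) *
        ∫ ρ in Set.Ioi (0:ℝ), ρ ^ (-(3:ℝ)/2) *
          Real.exp (-x₂ ^ 2 * τ * ρ - (η₁₂ ^ 2 * τ + η₁ ^ 2 * (1 - τ)) / (4 * τ * ρ)) =
      2 * Real.sqrt π * ∫ τ in Set.Ioo (0:ℝ) 1,
        Real.exp (-x₂ * Real.sqrt (τ * (η₁₂ ^ 2 - η₁ ^ 2) + η₁ ^ 2)) /
          Real.sqrt (τ * (η₁₂ ^ 2 - η₁ ^ 2) + η₁ ^ 2)) ∧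
    (2 * Real.sqrt π * ∫ τ in Set.Ioo (0:ℝ) 1,
        Real.exp (-x₂ * Real.sqrt (τ * (η₁₂ ^ 2 - η₁ ^ 2) + η₁ ^ 2)) /
          Real.sqrt (τ * (η₁₂ ^ 2 - η₁ ^ 2) + η₁ ^ 2) =
      4 * Real.sqrt π / (x₂ * (η₁₂ ^ 2 - η₁ ^ 2)) *
        (Real.exp (-η₁ * x₂) - Real.exp (-η₁₂ * x₂))) := by
  have hs : 0 < η₁₂ ^ 2 - η₁ ^ 2 := by nlinarith
  constructor
  · -- part 1
    rw [show (2 : ℝ) * Real.sqrt π * ∫ τ in Set.Ioo (0:ℝ) 1,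
        Real.exp (-x₂ * Real.sqrt (τ * (η₁₂ ^ 2 - η₁ ^ 2) + η₁ ^ 2)) /
          Real.sqrt (τ * (η₁₂ ^ 2 - η₁ ^ 2) + η₁ ^ 2)
      = ∫ τ in Set.Ioo (0:ℝ) 1, (2 * Real.sqrt π) *
          (Real.exp (-x₂ * Real.sqrt (τ * (η₁₂ ^ 2 - η₁ ^ 2) + η₁ ^ 2)) /
            Real.sqrt (τ * (η₁₂ ^ 2 - η₁ ^ 2) + η₁ ^ 2)) from (integral_const_mul _ _).symm]
    refine setIntegral_congr_fun measurableSet_Ioo fun τ hτ => ?_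
    obtain ⟨hτ0, hτ1⟩ := hτ
    set c := τ * (η₁₂ ^ 2 - η₁ ^ 2) + η₁ ^ 2 with hc
    have hcpos : 0 < c := by positivity
    have hscpos : 0 < Real.sqrt c := Real.sqrt_pos.mpr hcpos
    have hstau : 0 < Real.sqrt τ := Real.sqrt_pos.mpr hτ0
    set a := x₂ ^ 2 * τ with ha
    set b := c / (4 * τ) with hb
    have hapos : 0 < a := by positivity
    have hbpos : 0 < b := by positivity
    have hinner : (∫ ρ in Set.Ioi (0:ℝ), ρ ^ (-(3:ℝ)/2) *
          Real.exp (-x₂ ^ 2 * τ * ρ - (η₁₂ ^ 2 * τ + η₁ ^ 2 * (1 - τ)) / (4 * τ * ρ)))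
        = ∫ ρ in Set.Ioi (0:ℝ), ρ ^ (-(3:ℝ)/2) * Real.exp (-(a*ρ) - b/ρ) := by
      refine setIntegral_congr_fun measurableSet_Ioi fun ρ hρ => ?_
      have hρ' : (0:ℝ) < ρ := hρ
      congr 1
      rw [ha, hb, hc]
      field_simp
      ring
    rw [hinner, key_integral hapos hbpos]
    have hab : a * b = (x₂/2)^2 * c := by
      rw [ha, hb]; field_simp; ring
    have hsqab : Real.sqrt (a * b) = x₂/2 * Real.sqrt c := by
      rw [hab, Real.sqrt_mul (by positivity), Real.sqrt_sq (by positivity)]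
    have hsqb : Real.sqrt b = Real.sqrt c / (2 * Real.sqrt τ) := by
      rw [hb, show (4:ℝ) * τ = (2*Real.sqrt τ)^2 by
        rw [mul_pow, Real.sq_sqrt hτ0.le]; ring,
        Real.sqrt_div hcpos.le, Real.sqrt_sq (by positivity)]
    have htau : τ ^ (-(1:ℝ)/2) = (Real.sqrt τ)⁻¹ := by
      rw [show -(1:ℝ)/2 = -(1/2) by norm_num, Real.rpow_neg hτ0.le, ← Real.sqrt_eq_rpow]
    rw [htau, hsqb, hsqab, show -2 * (x₂/2 * Real.sqrt c) = -x₂ * Real.sqrt c by ring]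
    field_simp
  · -- part 2
    set s := η₁₂ ^ 2 - η₁ ^ 2 with hsdef
    set g : ℝ → ℝ := fun τ =>
      Real.exp (-x₂ * Real.sqrt (τ * s + η₁ ^ 2)) / Real.sqrt (τ * s + η₁ ^ 2) with hg
    have hcpos : ∀ τ : ℝ, τ ∈ Set.uIcc (0:ℝ) 1 → 0 < τ * s + η₁ ^ 2 := by
      intro τ hτ
      rw [Set.uIcc_of_le (by norm_num : (0:ℝ) ≤ 1)] at hτ
      nlinarith [hτ.1]
    set F : ℝ → ℝ := fun τ => -(2/(s*x₂)) * Real.exp (-x₂ * Real.sqrt (τ * s + η₁ ^ 2)) with hF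
    have hderiv : ∀ τ ∈ Set.uIcc (0:ℝ) 1, HasDerivAt F (g τ) τ := by
      intro τ hτ
      have hcτ : 0 < τ * s + η₁ ^ 2 := hcpos τ hτ
      have hscτ : 0 < Real.sqrt (τ * s + η₁ ^ 2) := Real.sqrt_pos.mpr hcτ
      have hc' : HasDerivAt (fun τ : ℝ => τ * s + η₁ ^ 2) s τ :=
        ((hasDerivAt_id τ).mul_const s).add_const _ |>.congr_deriv (by ring)
      have hsq : HasDerivAt (fun τ : ℝ => Real.sqrt (τ * s + η₁ ^ 2))
          (1/(2*Real.sqrt (τ * s + η₁ ^ 2)) * s) τ :=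
        (Real.hasDerivAt_sqrt (ne_of_gt hcτ)).comp τ hc'
      have hmul := hsq.const_mul (-x₂)
      have hexp := hmul.exp
      have hFd := hexp.const_mul (-(2/(s*x₂)))
      have heq : -(2/(s*x₂)) * (Real.exp (-x₂ * Real.sqrt (τ * s + η₁ ^ 2)) *
          (-x₂ * (1/(2*Real.sqrt (τ * s + η₁ ^ 2)) * s))) = g τ := by
        rw [hg]
        field_simp
      rw [← heq]
      exact hFd
    have hcont : ContinuousOn g (Set.uIcc (0:ℝ) 1) := by
      apply ContinuousOn.div
      · exact (Real.continuous_exp.comp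
          ((continuous_const.mul (Real.continuous_sqrt.comp
            ((continuous_id.mul continuous_const).add continuous_const))))).continuousOn
      · exact (Real.continuous_sqrt.comp
          ((continuous_id.mul continuous_const).add continuous_const)).continuousOn
      · exact fun τ hτ => ne_of_gt (Real.sqrt_pos.mpr (hcpos τ hτ))
    have hFTC := intervalIntegral.integral_eq_sub_of_hasDerivAt hderiv
      (hcont.intervalIntegrable)
    have hIoo : (∫ τ in Set.Ioo (0:ℝ) 1, g τ) = ∫ τ in (0:ℝ)..1, g τ := by
      rw [intervalIntegral.integral_of_le (by norm_num : (0:ℝ) ≤ 1),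
        ← integral_Ioc_eq_integral_Ioo]
    have h1 : Real.sqrt ((1:ℝ) * s + η₁ ^ 2) = η₁₂ := by
      rw [show (1:ℝ) * s + η₁ ^ 2 = η₁₂ ^ 2 by rw [hsdef]; ring,
        Real.sqrt_sq (by linarith)]
    have h0 : Real.sqrt ((0:ℝ) * s + η₁ ^ 2) = η₁ := by
      rw [show (0:ℝ) * s + η₁ ^ 2 = η₁ ^ 2 by ring, Real.sqrt_sq h₁.le]
    rw [hIoo, hFTC, hF]
    simp only [h1, h0]
    rw [show -x₂ * η₁₂ = -η₁₂ * x₂ by ring, show -x₂ * η₁ = -η₁ * x₂ by ring]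
    field_simp
    ring
end

section
/- For positive reals a, b, c, with s := √(2√(ac) + b): ∫₀^∞ x^{-1/2} K₂(2√((ax² + bx + c)/x)) / (ax² + bx + c) dx = π e^{-2s}/(2√c s²) + π e^{-2s}/(4√c s³). -/
open MeasureTheory Real

lemma besselK_neg (ν x : ℝ) : besselK (-ν) x = besselK ν x := by
  simp [besselK, neg_mul, Real.cosh_neg]

lemma sq_le_cosh (u : ℝ) : u^2/8 ≤ Real.cosh u := by
  have h1 : Real.exp |u| ≤ 2 * Real.cosh u := by
    rw [← Real.cosh_abs u]
    nlinarith [Real.sinh_lt_cosh |u|, Real.cosh_add_sinh |u|]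
  have h2 : (|u|/2 + 1)^2 ≤ Real.exp |u| := by
    have := Real.add_one_le_exp (|u|/2)
    have h3 : Real.exp (|u|/2) ^ 2 = Real.exp |u| := by
      rw [← Real.exp_nat_mul]; norm_num; ring_nf
    nlinarith [Real.exp_pos (|u|/2), abs_nonneg u]
  have : u^2 = |u|^2 := (sq_abs u).symm
  nlinarith [abs_nonneg u]

lemma integrable_exp_sub_cosh (ν z : ℝ) (hz : 0 < z) :
    Integrable (fun u : ℝ => Real.exp (ν*u - z * Real.cosh u)) := by
  have hint : Integrable (fun u : ℝ => Real.exp (2*ν^2/z) * Real.exp (-(z/8) * (u - 4*ν/z)^2)) := by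
    exact ((integrable_exp_neg_mul_sq (by positivity : (0:ℝ) < z/8)).comp_sub_right
      (4*ν/z)).const_mul _
  refine hint.mono' ?_ ?_
  · apply Measurable.aestronglyMeasurable; fun_prop
  · filter_upwards with u
    rw [Real.norm_eq_abs, abs_of_nonneg (Real.exp_pos _).le, ← Real.exp_add, Real.exp_le_exp]
    have h := sq_le_cosh u
    have key : 2*ν^2/z + (-(z/8) * (u - 4*ν/z)^2) = ν*u - z/8*u^2 := by
      field_simp; ring
    have : z * (u^2/8) ≤ z * Real.cosh u := by nlinarith
    linarith

lemma integral_exp_sub_cosh (ν z : ℝ) (hz : 0 < z) :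
    ∫ u : ℝ, Real.exp (ν*u - z * Real.cosh u) = 2 * besselK ν z := by
  have hI := integrable_exp_sub_cosh ν z hz
  have hI' := integrable_exp_sub_cosh (-ν) z hz
  rw [← intervalIntegral.integral_Iic_add_Ioi (hI.integrableOn) (hI.integrableOn)]
  have h1 : ∫ u in Set.Iic (0:ℝ), Real.exp (ν*u - z * Real.cosh u)
      = ∫ u in Set.Ioi (0:ℝ), Real.exp (-ν*u - z * Real.cosh u) := by
    have := integral_comp_neg_Ioi (0:ℝ) (fun u => Real.exp (ν*u - z * Real.cosh u))
    rw [neg_zero] at this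
    rw [← this]
    refine setIntegral_congr_fun measurableSet_Ioi fun u _ => ?_
    rw [Real.cosh_neg]; ring_nf
  rw [h1, ← integral_add (hI'.integrableOn) (hI.integrableOn), besselK,
    ← integral_const_mul]
  refine setIntegral_congr_fun measurableSet_Ioi fun u _ => ?_
  rw [Real.cosh_eq (ν*u)]
  have e1 : -ν * u - z * Real.cosh u = (-(ν*u)) + (- z * Real.cosh u) := by ring
  have e2 : ν * u - z * Real.cosh u = (ν*u) + (- z * Real.cosh u) := by ring
  rw [e1, e2, Real.exp_add, Real.exp_add]
  ring

lemma expMap_stuff (r : ℝ) (hr : 0 < r) :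
    ((fun u : ℝ => r * Real.exp u) '' Set.univ = Set.Ioi 0) ∧
    Set.InjOn (fun u : ℝ => r * Real.exp u) Set.univ := by
  constructor
  · ext x
    simp only [Set.image_univ, Set.mem_range, Set.mem_Ioi]
    constructor
    · rintro ⟨u, rfl⟩; positivity
    · intro hx; exact ⟨Real.log (x/r), by
        rw [Real.exp_log (by positivity)]; field_simp⟩
  · intro u _ v _ h
    simpa [hr.ne', Real.exp_injective.eq_iff] using h

lemma bessel_transformed (ν p q u : ℝ) (hp : 0 < p) (hq : 0 < q) :
    (Real.sqrt (q/p) * Real.exp u) *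
      ((Real.sqrt (q/p) * Real.exp u) ^ (ν-1) *
        Real.exp (-(p * (Real.sqrt (q/p) * Real.exp u) + q / (Real.sqrt (q/p) * Real.exp u)))) =
    (q/p) ^ (ν/2) * Real.exp (ν * u - 2*Real.sqrt (p*q) * Real.cosh u) := by
  have hr : 0 < Real.sqrt (q/p) := Real.sqrt_pos.2 (by positivity)
  set r := Real.sqrt (q/p) with hrdef
  have h1 : p * r = Real.sqrt (p*q) := by
    rw [hrdef, show p*q = p^2*(q/p) by field_simp, Real.sqrt_mul (by positivity), Real.sqrt_sq hp.le]
  have h2 : q / r = Real.sqrt (p*q) := by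
    have hh : Real.sqrt (p*q) * r = q := by
      rw [hrdef, ← Real.sqrt_mul (by positivity)]
      rw [show p*q*(q/p) = q^2 by field_simp, Real.sqrt_sq hq.le]
    rw [eq_comm, eq_div_iff hr.ne']
    linarith [hh]
  have h3 : (r * Real.exp u) ^ (ν-1) = r ^ (ν-1) * Real.exp ((ν-1) * u) := by
    rw [Real.mul_rpow hr.le (Real.exp_pos u).le, ← Real.exp_mul, mul_comm u (ν-1)]
  have h4 : r ^ (ν : ℝ) = (q/p) ^ (ν/2) := by
    rw [hrdef, Real.sqrt_eq_rpow, ← Real.rpow_mul (by positivity : (0:ℝ) ≤ q/p)]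
    ring_nf
  have h5 : r ^ (ν:ℝ) = r * r ^ (ν-1) := by
    have h := Real.rpow_add hr 1 (ν-1)
    simp only [Real.rpow_one] at h
    rw [← h]; norm_num
  have h6 : -(p * (r * Real.exp u) + q / (r * Real.exp u))
      = -2*Real.sqrt (p*q) * Real.cosh u + 0 := by
    rw [Real.cosh_eq, ← mul_assoc, h1, div_mul_eq_div_div, h2, div_eq_mul_inv, ← Real.exp_neg]
    ring
  rw [h3, h6, Real.exp_add, Real.exp_zero, mul_one,
    show ν*u - 2*Real.sqrt (p*q)*Real.cosh u
      = u + ((ν-1)*u + (-2*Real.sqrt (p*q)*Real.cosh u)) by ring,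
    Real.exp_add, Real.exp_add, ← h4, h5]
  ring

lemma integral_bessel (ν p q : ℝ) (hp : 0 < p) (hq : 0 < q) :
    ∫ x in Set.Ioi (0:ℝ), x ^ (ν-1) * Real.exp (-(p*x + q/x)) =
      2 * (q/p) ^ (ν/2) * besselK ν (2 * Real.sqrt (p*q)) := by
  obtain ⟨him, hinj⟩ := expMap_stuff (Real.sqrt (q/p)) (Real.sqrt_pos.2 (by positivity))
  have hderiv : ∀ u ∈ Set.univ, HasDerivWithinAt (fun u : ℝ => Real.sqrt (q/p) * Real.exp u)
      (Real.sqrt (q/p) * Real.exp u) Set.univ u :=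
    fun u _ => ((Real.hasDerivAt_exp u).const_mul _).hasDerivWithinAt
  rw [← him, integral_image_eq_integral_abs_deriv_smul MeasurableSet.univ hderiv hinj]
  have hz : 0 < 2 * Real.sqrt (p*q) := by positivity
  rw [Measure.restrict_univ]
  calc ∫ u : ℝ, |Real.sqrt (q/p) * Real.exp u| •
        ((Real.sqrt (q/p) * Real.exp u) ^ (ν-1) *
          Real.exp (-(p * (Real.sqrt (q/p) * Real.exp u) + q / (Real.sqrt (q/p) * Real.exp u))))
      = ∫ u : ℝ, (q/p) ^ (ν/2) * Real.exp (ν * u - 2*Real.sqrt (p*q) * Real.cosh u) := by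
        congr 1; ext u
        rw [smul_eq_mul, abs_of_pos (by positivity), bessel_transformed ν p q u hp hq]
    _ = (q/p) ^ (ν/2) * (2 * besselK ν (2 * Real.sqrt (p*q))) := by
        rw [integral_const_mul, integral_exp_sub_cosh ν _ hz]
    _ = 2 * (q/p) ^ (ν/2) * besselK ν (2 * Real.sqrt (p*q)) := by ring

lemma integrableOn_bessel (ν p q : ℝ) (hp : 0 < p) (hq : 0 < q) :
    IntegrableOn (fun x => x ^ (ν-1) * Real.exp (-(p*x + q/x))) (Set.Ioi (0:ℝ)) := by
  obtain ⟨him, hinj⟩ := expMap_stuff (Real.sqrt (q/p)) (Real.sqrt_pos.2 (by positivity))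
  have hderiv : ∀ u ∈ Set.univ, HasDerivWithinAt (fun u : ℝ => Real.sqrt (q/p) * Real.exp u)
      (Real.sqrt (q/p) * Real.exp u) Set.univ u :=
    fun u _ => ((Real.hasDerivAt_exp u).const_mul _).hasDerivWithinAt
  rw [← him, integrableOn_image_iff_integrableOn_abs_deriv_smul MeasurableSet.univ hderiv hinj]
  have hz : 0 < 2 * Real.sqrt (p*q) := by positivity
  have : (fun u : ℝ => |Real.sqrt (q/p) * Real.exp u| •
        ((Real.sqrt (q/p) * Real.exp u) ^ (ν-1) *
          Real.exp (-(p * (Real.sqrt (q/p) * Real.exp u) + q / (Real.sqrt (q/p) * Real.exp u)))))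
      = fun u : ℝ => (q/p) ^ (ν/2) * Real.exp (ν * u - 2*Real.sqrt (p*q) * Real.cosh u) := by
    ext u
    rw [smul_eq_mul, abs_of_pos (by positivity), bessel_transformed ν p q u hp hq]
  rw [this, IntegrableOn, Measure.restrict_univ]
  exact (integrable_exp_sub_cosh ν _ hz).const_mul _

lemma integral_sq_gaussian (α : ℝ) (hα : 0 < α) :
    ∫ w in Set.Ioi (0:ℝ), w^2 * Real.exp (-α * w^2) =
      Real.sqrt π / (4 * α * Real.sqrt α) := by
  have h := integral_comp_rpow_Ioi_of_pos (g := fun y : ℝ => Real.sqrt y / 2 * Real.exp (-(α * y)))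
    (p := 2) zero_lt_two
  have h1 : ∀ x ∈ Set.Ioi (0:ℝ), ((2:ℝ) * x ^ ((2:ℝ)-1)) •
      (Real.sqrt (x ^ (2:ℝ)) / 2 * Real.exp (-(α * x ^ (2:ℝ)))) = x^2 * Real.exp (-α * x^2) := by
    intro x hx
    have hx0 : (0:ℝ) < x := hx
    rw [show ((2:ℝ)-1) = 1 by norm_num, Real.rpow_one, Real.rpow_two,
      Real.sqrt_sq hx0.le, smul_eq_mul]
    ring_nf
  rw [setIntegral_congr_fun measurableSet_Ioi h1] at h
  rw [h]
  have h2 : ∀ y ∈ Set.Ioi (0:ℝ), Real.sqrt y / 2 * Real.exp (-(α * y))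
      = (1/2) * (y ^ ((3/2 : ℝ) - 1) * Real.exp (-(α * y))) := by
    intro y _
    rw [show ((3/2:ℝ)-1) = 1/2 by norm_num, ← Real.sqrt_eq_rpow]
    ring
  rw [setIntegral_congr_fun measurableSet_Ioi h2, integral_const_mul,
    integral_rpow_mul_exp_neg_mul_Ioi (by norm_num : (0:ℝ) < 3/2) hα]
  have hG : Real.Gamma (3/2) = Real.sqrt π / 2 := by
    rw [show (3/2 : ℝ) = 1/2 + 1 by norm_num, Real.Gamma_add_one (by norm_num),
      Real.Gamma_one_half_eq]
    ring
  have hs : 0 < Real.sqrt α := Real.sqrt_pos.2 hα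
  have h3 : ((1/α : ℝ)) ^ ((3/2:ℝ)) = 1 / (α * Real.sqrt α) := by
    have e1 : ((1/α:ℝ))^((3/2:ℝ)) = (Real.sqrt (1/α))^(3:ℕ) := by
      rw [← Real.rpow_natCast (Real.sqrt (1/α)) 3, Real.sqrt_eq_rpow,
        ← Real.rpow_mul (by positivity)]
      norm_num
    rw [e1, one_div, Real.sqrt_inv, ← one_div, div_pow, one_pow]
    congr 1
    have : Real.sqrt α * Real.sqrt α = α := Real.mul_self_sqrt hα.le
    nlinarith [this]
  rw [hG, h3]
  field_simp
  norm_num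

lemma sinhMap_stuff :
    ((fun t : ℝ => Real.sinh (t/2)) '' Set.Ioi 0 = Set.Ioi 0) ∧
    Set.InjOn (fun t : ℝ => Real.sinh (t/2)) (Set.Ioi 0) := by
  constructor
  · ext w
    simp only [Set.mem_image, Set.mem_Ioi]
    constructor
    · rintro ⟨t, ht, rfl⟩
      exact Real.sinh_pos_iff.2 (by linarith)
    · intro hw
      have hp : 0 < Real.arsinh w := Real.arsinh_pos_iff.2 hw
      refine ⟨2 * Real.arsinh w, by linarith, ?_⟩
      rw [show 2 * Real.arsinh w / 2 = Real.arsinh w by ring, Real.sinh_arsinh]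
  · intro t _ u _ h
    have := Real.sinh_injective h
    linarith

lemma cosh_eq_sinh_half (t : ℝ) : Real.cosh t = 1 + 2 * Real.sinh (t/2)^2 := by
  have h := Real.cosh_sq (t/2)
  have h2 : Real.cosh (2 * (t/2)) = Real.cosh (t/2)^2 + Real.sinh (t/2)^2 :=
    Real.cosh_two_mul (t/2)
  rw [show 2 * (t/2) = t by ring] at h2
  nlinarith

lemma cosh_three_half (t : ℝ) :
    Real.cosh (3/2 * t) = Real.cosh (t/2) * (1 + 4 * Real.sinh (t/2)^2) := by
  have h1 : Real.cosh (3/2 * t) = Real.cosh (t + t/2) := by ring_nf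
  have h2 : Real.sinh t = 2 * Real.sinh (t/2) * Real.cosh (t/2) := by
    have := Real.sinh_two_mul (t/2)
    rw [show 2 * (t/2) = t by ring] at this
    linarith
  rw [h1, Real.cosh_add, cosh_eq_sinh_half t, h2]
  ring

lemma besselK_half (z : ℝ) (hz : 0 < z) :
    besselK (1/2) z = Real.sqrt (π/(2*z)) * Real.exp (-z) := by
  obtain ⟨him, hinj⟩ := sinhMap_stuff
  have hderiv : ∀ t ∈ Set.Ioi (0:ℝ), HasDerivWithinAt (fun t : ℝ => Real.sinh (t/2))
      (Real.cosh (t/2) * (1/2)) (Set.Ioi 0) t := fun t _ =>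
    HasDerivAt.hasDerivWithinAt (by
      have := (Real.hasDerivAt_sinh (t/2)).comp t ((hasDerivAt_id' t).div_const 2); exact this)
  have key := integral_image_eq_integral_abs_deriv_smul measurableSet_Ioi hderiv hinj
    (fun w => 2 * Real.exp (-z * (1 + 2 * w^2)))
  rw [him] at key
  have h1 : ∀ t ∈ Set.Ioi (0:ℝ), |Real.cosh (t/2) * (1/2)| •
      (2 * Real.exp (-z * (1 + 2 * Real.sinh (t/2)^2)))
      = Real.exp (-z * Real.cosh t) * Real.cosh ((1/2:ℝ) * t) := by
    intro t _
    rw [smul_eq_mul, abs_of_pos (mul_pos (Real.cosh_pos _) (by norm_num)),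
      ← cosh_eq_sinh_half, show (1/2:ℝ)*t = t/2 by ring]
    ring
  rw [setIntegral_congr_fun measurableSet_Ioi h1] at key
  rw [besselK, ← key]
  have h2 : ∀ w ∈ Set.Ioi (0:ℝ), 2 * Real.exp (-z*(1+2*w^2))
      = (2*Real.exp (-z)) * Real.exp (-(2*z)*w^2) := by
    intro w _
    rw [mul_assoc, ← Real.exp_add]
    ring_nf
  rw [setIntegral_congr_fun measurableSet_Ioi h2, integral_const_mul, integral_gaussian_Ioi]
  ring

lemma besselK_threehalf (z : ℝ) (hz : 0 < z) :
    besselK (3/2) z = Real.sqrt (π/(2*z)) * Real.exp (-z) * (1 + 1/z) := by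
  obtain ⟨him, hinj⟩ := sinhMap_stuff
  have hderiv : ∀ t ∈ Set.Ioi (0:ℝ), HasDerivWithinAt (fun t : ℝ => Real.sinh (t/2))
      (Real.cosh (t/2) * (1/2)) (Set.Ioi 0) t := fun t _ =>
    HasDerivAt.hasDerivWithinAt (by
      have := (Real.hasDerivAt_sinh (t/2)).comp t ((hasDerivAt_id' t).div_const 2); exact this)
  have key := integral_image_eq_integral_abs_deriv_smul measurableSet_Ioi hderiv hinj
    (fun w => 2 * (1 + 4*w^2) * Real.exp (-z * (1 + 2 * w^2)))
  rw [him] at key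
  have h1 : ∀ t ∈ Set.Ioi (0:ℝ), |Real.cosh (t/2) * (1/2)| •
      (2 * (1 + 4*Real.sinh (t/2)^2) * Real.exp (-z * (1 + 2 * Real.sinh (t/2)^2)))
      = Real.exp (-z * Real.cosh t) * Real.cosh ((3/2:ℝ) * t) := by
    intro t _
    rw [smul_eq_mul, abs_of_pos (mul_pos (Real.cosh_pos _) (by norm_num)),
      ← cosh_eq_sinh_half, cosh_three_half]
    ring
  rw [setIntegral_congr_fun measurableSet_Ioi h1] at key
  rw [besselK, ← key]
  have h2z : (0:ℝ) < 2*z := by linarith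
  have h2 : ∀ w ∈ Set.Ioi (0:ℝ), 2 * (1 + 4*w^2) * Real.exp (-z*(1+2*w^2))
      = (2*Real.exp (-z)) * Real.exp (-(2*z)*w^2)
        + (8*Real.exp (-z)) * (w^2 * Real.exp (-(2*z)*w^2)) := by
    intro w _
    have e : Real.exp (-z*(1+2*w^2)) = Real.exp (-z) * Real.exp (-(2*z)*w^2) := by
      rw [← Real.exp_add]; ring_nf
    rw [e]; ring
  rw [setIntegral_congr_fun measurableSet_Ioi h2]
  have hi1 : IntegrableOn (fun w : ℝ => (2*Real.exp (-z)) * Real.exp (-(2*z)*w^2))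
      (Set.Ioi 0) := ((integrable_exp_neg_mul_sq h2z).integrableOn).const_mul _
  have hi2 : IntegrableOn (fun w : ℝ => (8*Real.exp (-z)) * (w^2 * Real.exp (-(2*z)*w^2)))
      (Set.Ioi 0) := by
    have := integrableOn_rpow_mul_exp_neg_mul_sq h2z (s := 2) (by norm_num)
    simp only [Real.rpow_two] at this
    exact this.const_mul _
  rw [integral_add hi1 hi2, integral_const_mul, integral_const_mul, integral_gaussian_Ioi,
    integral_sq_gaussian _ h2z]
  rw [Real.sqrt_div pi_pos.le]
  have hs2 : 0 < Real.sqrt (2*z) := Real.sqrt_pos.2 h2z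
  field_simp
  ring

noncomputable def FF (a b c : ℝ) (x t : ℝ) : ℝ :=
  x ^ (-(3:ℝ)/2) * (t ^ (-(3:ℝ)) * Real.exp (-(t + (a*x^2+b*x+c)/(x*t))))

lemma FF_nonneg (a b c x t : ℝ) (hx : 0 < x) (ht : 0 < t) : 0 ≤ FF a b c x t := by
  have h1 : (0:ℝ) ≤ x ^ (-(3:ℝ)/2) := Real.rpow_nonneg hx.le _
  have h2 : (0:ℝ) ≤ t ^ (-(3:ℝ)) := Real.rpow_nonneg ht.le _
  exact mul_nonneg h1 (mul_nonneg h2 (Real.exp_nonneg _))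

lemma FF_factor (a b c t : ℝ) (ht : 0 < t) : ∀ x ∈ Set.Ioi (0:ℝ),
    FF a b c x t = (t ^ (-(3:ℝ)) * Real.exp (-(t + b/t))) *
      (x ^ ((-(1:ℝ)/2) - 1) * Real.exp (-((a/t)*x + (c/t)/x))) := by
  intro x hx
  have hx0 : (0:ℝ) < x := hx
  have hexp : -(t + (a*x^2+b*x+c)/(x*t)) = -(t + b/t) + -((a/t)*x + (c/t)/x) := by
    field_simp
    ring
  rw [FF, hexp, Real.exp_add, show ((-(1:ℝ)/2) - 1) = -(3:ℝ)/2 by norm_num]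
  ring

lemma FF_integrableOn_x (a b c t : ℝ) (ha : 0 < a) (hc : 0 < c) (ht : 0 < t) :
    IntegrableOn (fun x => FF a b c x t) (Set.Ioi (0:ℝ)) := by
  have h := (integrableOn_bessel (-(1:ℝ)/2) (a/t) (c/t) (by positivity) (by positivity)).const_mul
    (t ^ (-(3:ℝ)) * Real.exp (-(t + b/t)))
  exact MeasureTheory.IntegrableOn.congr_fun h
    (fun x hx => (FF_factor a b c t ht x hx).symm) measurableSet_Ioi

lemma sqrt_quarter_aux (a c t : ℝ) (ha : 0 < a) (hc : 0 < c) (ht : 0 < t) :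
    (c/a) ^ (-(1:ℝ)/4) * Real.sqrt (π/(2*(2*(Real.sqrt (a*c)/t))))
      = Real.sqrt π * Real.sqrt t / (2*Real.sqrt c) := by
  have hac : 0 < Real.sqrt (a*c) := Real.sqrt_pos.2 (by positivity)
  have e1 : π/(2*(2*(Real.sqrt (a*c)/t))) = (π*t)/(4*Real.sqrt (a*c)) := by
    field_simp; ring
  have h4 : Real.sqrt (Real.sqrt (a*c)) = (a*c) ^ ((1:ℝ)/4) := by
    rw [Real.sqrt_eq_rpow, Real.sqrt_eq_rpow, ← Real.rpow_mul (by positivity)]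
    norm_num
  have h5 : (c/a) ^ (-(1:ℝ)/4) = a ^ ((1:ℝ)/4) / c ^ ((1:ℝ)/4) := by
    rw [show (-(1:ℝ)/4) = -((1:ℝ)/4) by norm_num, Real.rpow_neg (by positivity),
      Real.div_rpow hc.le ha.le, inv_div]
  have h6 : (a*c) ^ ((1:ℝ)/4) = a ^ ((1:ℝ)/4) * c ^ ((1:ℝ)/4) := Real.mul_rpow ha.le hc.le
  have h7 : Real.sqrt c = c ^ ((1:ℝ)/4) * c ^ ((1:ℝ)/4) := by
    rw [Real.sqrt_eq_rpow, ← Real.rpow_add hc]; norm_num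
  have e2 : Real.sqrt ((π*t)/(4*Real.sqrt (a*c)))
      = Real.sqrt π * Real.sqrt t / (2 * (a*c) ^ ((1:ℝ)/4)) := by
    rw [Real.sqrt_div (by positivity), Real.sqrt_mul pi_pos.le,
      Real.sqrt_mul (by norm_num : (0:ℝ) ≤ 4), show Real.sqrt 4 = 2 by
        rw [show (4:ℝ) = 2^2 by norm_num, Real.sqrt_sq (by norm_num : (0:ℝ) ≤ 2)], h4]
  rw [e1, e2, h5, h6, h7]
  have ha4 : (0:ℝ) < a ^ ((1:ℝ)/4) := Real.rpow_pos_of_pos ha _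
  have hc4 : (0:ℝ) < c ^ ((1:ℝ)/4) := Real.rpow_pos_of_pos hc _
  field_simp

lemma FF_integral_x (a b c t : ℝ) (ha : 0 < a) (hc : 0 < c) (ht : 0 < t) :
    ∫ x in Set.Ioi (0:ℝ), FF a b c x t
      = (Real.sqrt π / Real.sqrt c) *
        (t ^ (-(5:ℝ)/2) * Real.exp (-(t + (2*Real.sqrt (a*c)+b)/t))) := by
  rw [setIntegral_congr_fun measurableSet_Ioi (FF_factor a b c t ht), integral_const_mul,
    integral_bessel (-(1:ℝ)/2) (a/t) (c/t) (by positivity) (by positivity)]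
  have h1 : (c/t)/(a/t) = c/a := by
    field_simp
  have h2 : (a/t)*(c/t) = (a*c)/t^2 := by
    field_simp
  have h3 : Real.sqrt ((a*c)/t^2) = Real.sqrt (a*c)/t := by
    rw [Real.sqrt_div (by positivity), Real.sqrt_sq ht.le]
  rw [h1, h2, h3, show ((-(1:ℝ)/2)/2) = -(1:ℝ)/4 by norm_num,
    show (-(1:ℝ)/2) = -((1:ℝ)/2) by norm_num, besselK_neg,
    besselK_half _ (by positivity)]
  have hE : Real.exp (-(t+b/t)) * Real.exp (-(2*(Real.sqrt (a*c)/t)))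
      = Real.exp (-(t+(2*Real.sqrt (a*c)+b)/t)) := by
    rw [← Real.exp_add]
    congr 1
    field_simp
    ring
  have hT : t ^ (-(3:ℝ)) * Real.sqrt t = t ^ (-(5:ℝ)/2) := by
    rw [Real.sqrt_eq_rpow, ← Real.rpow_add ht]
    norm_num
  have key := sqrt_quarter_aux a c t ha hc ht
  calc t ^ (-(3:ℝ)) * Real.exp (-(t + b/t)) *
        (2 * (c/a) ^ (-(1:ℝ)/4) *
          (Real.sqrt (π/(2*(2*(Real.sqrt (a*c)/t)))) * Real.exp (-(2*(Real.sqrt (a*c)/t)))))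
      = (t ^ (-(3:ℝ))) * (Real.exp (-(t+b/t)) * Real.exp (-(2*(Real.sqrt (a*c)/t)))) *
          (2 * ((c/a) ^ (-(1:ℝ)/4) * Real.sqrt (π/(2*(2*(Real.sqrt (a*c)/t)))))) := by ring
    _ = (t ^ (-(3:ℝ))) * Real.exp (-(t+(2*Real.sqrt (a*c)+b)/t)) *
          (2 * (Real.sqrt π * Real.sqrt t / (2*Real.sqrt c))) := by rw [hE, key]
    _ = (Real.sqrt π / Real.sqrt c) *
        ((t ^ (-(3:ℝ)) * Real.sqrt t) * Real.exp (-(t + (2*Real.sqrt (a*c)+b)/t))) := by ring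
    _ = _ := by rw [hT]

lemma inner_eq (a b c x : ℝ) (ha : 0 < a) (hb : 0 < b) (hc : 0 < c) (hx : 0 < x) :
    ∫ t in Set.Ioi (0:ℝ), t ^ (-(3:ℝ)) * Real.exp (-(t + (a*x^2+b*x+c)/(x*t)))
      = 2 * (x/(a*x^2+b*x+c)) * besselK 2 (2 * Real.sqrt ((a*x^2+b*x+c)/x)) := by
  have hQ : 0 < a*x^2+b*x+c := by
    have h1 := mul_pos ha (pow_pos hx 2)
    have h2 := mul_pos hb hx
    linarith
  have hB := integral_bessel (-2 : ℝ) 1 ((a*x^2+b*x+c)/x) one_pos (div_pos hQ hx)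
  have hL : ∀ t ∈ Set.Ioi (0:ℝ), t ^ ((-2:ℝ)-1) * Real.exp (-(1*t + ((a*x^2+b*x+c)/x)/t))
      = t ^ (-(3:ℝ)) * Real.exp (-(t + (a*x^2+b*x+c)/(x*t))) := by
    intro t _
    rw [show ((-2:ℝ)-1) = -(3:ℝ) by norm_num, one_mul, div_div]
  rw [setIntegral_congr_fun measurableSet_Ioi hL] at hB
  rw [hB, div_one, one_mul, show ((-2:ℝ)/2) = (-1:ℝ) by norm_num, Real.rpow_neg_one, inv_div,
    show (-2:ℝ) = -(2:ℝ) by norm_num, besselK_neg]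

lemma step1 (a b c x : ℝ) (ha : 0 < a) (hb : 0 < b) (hc : 0 < c) (hx : 0 < x) :
    x ^ (-(1:ℝ)/2) * besselK 2 (2 * Real.sqrt ((a * x ^ 2 + b * x + c) / x)) /
          (a * x ^ 2 + b * x + c)
      = (1/2) * ∫ t in Set.Ioi (0:ℝ), FF a b c x t := by
  have hQ : 0 < a*x^2+b*x+c := by
    have h1 := mul_pos ha (pow_pos hx 2)
    have h2 := mul_pos hb hx
    linarith
  simp only [FF]
  rw [integral_const_mul, inner_eq a b c x ha hb hc hx]
  have hx32 : x ^ (-(3:ℝ)/2) * x = x ^ (-(1:ℝ)/2) := by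
    have h := Real.rpow_add hx (-(3:ℝ)/2) 1
    rw [Real.rpow_one] at h
    rw [← h]; norm_num
  rw [← hx32]
  field_simp

lemma FF_prod_integrable (a b c : ℝ) (ha : 0 < a) (hb : 0 < b) (hc : 0 < c) :
    Integrable (fun p : ℝ×ℝ => FF a b c p.1 p.2)
      ((volume.restrict (Set.Ioi (0:ℝ))).prod (volume.restrict (Set.Ioi (0:ℝ)))) := by
  have hmeas : AEStronglyMeasurable (fun p : ℝ×ℝ => FF a b c p.1 p.2)
      ((volume.restrict (Set.Ioi (0:ℝ))).prod (volume.restrict (Set.Ioi (0:ℝ)))) := by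
    apply Measurable.aestronglyMeasurable
    unfold FF
    fun_prop
  rw [integrable_prod_iff' hmeas]
  constructor
  · filter_upwards [ae_restrict_mem measurableSet_Ioi] with t ht
    exact FF_integrableOn_x a b c t ha hc ht
  · have base := (integrableOn_bessel (-(3:ℝ)/2) 1 (2*Real.sqrt (a*c)+b) one_pos
      (by positivity)).const_mul (Real.sqrt π / Real.sqrt c)
    apply base.congr
    filter_upwards [ae_restrict_mem measurableSet_Ioi] with t ht
    have hnorm : ∀ x ∈ Set.Ioi (0:ℝ), ‖FF a b c x t‖ = FF a b c x t :=
      fun x hx => norm_of_nonneg (FF_nonneg a b c x t hx ht)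
    rw [setIntegral_congr_fun measurableSet_Ioi hnorm, FF_integral_x a b c t ha hc ht,
      show ((-(3:ℝ)/2)-1) = -(5:ℝ)/2 by norm_num, one_mul]

theorem K2_xneg12_quadratic_argument_integral (a b c : ℝ) (ha : 0 < a) (hb : 0 < b) (hc : 0 < c) :
    ∫ x in Set.Ioi (0:ℝ),
        x ^ (-(1:ℝ)/2) * besselK 2 (2 * Real.sqrt ((a * x ^ 2 + b * x + c) / x)) /
          (a * x ^ 2 + b * x + c) =
      π * Real.exp (-2 * Real.sqrt (2 * Real.sqrt (a * c) + b)) /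
          (2 * Real.sqrt c * Real.sqrt (2 * Real.sqrt (a * c) + b) ^ 2) +
        π * Real.exp (-2 * Real.sqrt (2 * Real.sqrt (a * c) + b)) /
          (4 * Real.sqrt c * Real.sqrt (2 * Real.sqrt (a * c) + b) ^ 3) := by
  have hs0 : (0:ℝ) < 2 * Real.sqrt (a*c) + b := by positivity
  rw [setIntegral_congr_fun measurableSet_Ioi
    (fun x hx => step1 a b c x ha hb hc hx), integral_const_mul,
    integral_integral_swap (FF_prod_integrable a b c ha hb hc),
    setIntegral_congr_fun measurableSet_Ioi
      (fun t ht => FF_integral_x a b c t ha hc ht), integral_const_mul]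
  have h2 : ∀ t ∈ Set.Ioi (0:ℝ), t ^ (-(5:ℝ)/2) * Real.exp (-(t+(2*Real.sqrt (a*c)+b)/t))
      = t ^ ((-(3:ℝ)/2)-1) * Real.exp (-(1*t+(2*Real.sqrt (a*c)+b)/t)) := by
    intro t _
    rw [show ((-(3:ℝ)/2)-1) = -(5:ℝ)/2 by norm_num, one_mul]
  rw [setIntegral_congr_fun measurableSet_Ioi h2,
    integral_bessel (-(3:ℝ)/2) 1 (2*Real.sqrt (a*c)+b) one_pos hs0, div_one, one_mul,
    show (-(3:ℝ)/2) = -((3:ℝ)/2) by norm_num, besselK_neg,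
    besselK_threehalf _ (by positivity)]
  set s0 := 2 * Real.sqrt (a*c) + b with hs0def
  set S := Real.sqrt s0 with hSdef
  have hSpos : 0 < S := Real.sqrt_pos.2 hs0
  have hSsq : S * S = s0 := Real.mul_self_sqrt hs0.le
  have hpow : s0 ^ (-((3:ℝ)/2)/2) = 1/(S * Real.sqrt S) := by
    have hq : Real.sqrt S = s0 ^ ((1:ℝ)/4) := by
      rw [hSdef, Real.sqrt_eq_rpow, Real.sqrt_eq_rpow, ← Real.rpow_mul hs0.le]
      norm_num
    have h34 : s0 ^ ((3:ℝ)/4) = S * Real.sqrt S := by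
      rw [hq, hSdef, Real.sqrt_eq_rpow, ← Real.rpow_add hs0]
      norm_num
    rw [show (-((3:ℝ)/2)/2) = -((3:ℝ)/4) by norm_num, Real.rpow_neg hs0.le, h34, one_div]
  have hgauss : Real.sqrt (π/(2*(2*S))) = Real.sqrt π/(2*Real.sqrt S) := by
    rw [show π/(2*(2*S)) = π/(4*S) by ring, Real.sqrt_div pi_pos.le,
      Real.sqrt_mul (by norm_num : (0:ℝ) ≤ 4),
      show Real.sqrt 4 = 2 by
        rw [show (4:ℝ) = 2^2 by norm_num, Real.sqrt_sq (by norm_num : (0:ℝ) ≤ 2)]]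
  rw [hpow, hgauss]
  have hpi : Real.sqrt π * Real.sqrt π = π := Real.mul_self_sqrt pi_pos.le
  have hSS : Real.sqrt S * Real.sqrt S = S := Real.mul_self_sqrt hSpos.le
  have hsqS : 0 < Real.sqrt S := Real.sqrt_pos.2 hSpos
  have hsc : 0 < Real.sqrt c := Real.sqrt_pos.2 hc
  have hexparg : -(2*S) = -2*S := by ring
  rw [hexparg]
  field_simp
  ring_nf
  rw [show Real.sqrt π ^ 2 = π from by rw [sq]; exact hpi,
    show Real.sqrt S ^ 2 = S from by rw [sq]; exact hSS]
  ring
end
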